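/- arXiv:1912.13066 — 7 statements merged into one kernel-verified Lean document; each statement's English description precedes it below -/
import Mathlib

section
/- Let N ≥ 1 be an integer, R > 0, and let B ⊆ ℝᴺ be the open Euclidean ball of radius R centered at the origin, of volume m. Let f be bistable with threshold θ ∈ (0,1) and F(1) > 0, let δ ∈ (0,1) satisfy δ < 1 - (-F(θ)/(F(1)-F(θ)))^{1/N}, and let μ satisfy 0 < μ < 2δ²·Γ(N/2+1)^{2/N}·(F(θ)+(1-δ)^N·(F(1)-F(θ)))·m^{2/N}/(π·(1-(1-δ)^N)). Define v_δ : ℝᴺ → ℝ by v_δ(x) = 1 if ‖x‖ ≤ (1-δ)R, v_δ(x) = (R - ‖x‖)/(δR) if (1-δ)R < ‖x‖ ≤ R, and v_δ(x) = 0 if ‖x‖ > R. Then ∫_B (1/2)·‖∇v_δ(x)‖² dx - (1/μ)·∫_B F(v_δ(x)) dx < 0, where ∇v_δ(x) denotes the Fréchet derivative of v_δ at x (which exists for almost every x ∈ B). -/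
open Set MeasureTheory Real

noncomputable section

/-- `f` is a bistable nonlinearity with threshold `θ`. -/
def Bistable (f : ℝ → ℝ) (θ : ℝ) : Prop :=
  θ ∈ Set.Ioo (0:ℝ) 1 ∧ ContDiff ℝ 1 f ∧
  f 0 = 0 ∧ f θ = 0 ∧ f 1 = 0 ∧
  deriv f 0 < 0 ∧ 0 < deriv f θ ∧ deriv f 1 < 0 ∧
  (∀ s ∈ Set.Ioo 0 θ, f s < 0) ∧ (∀ s ∈ Set.Ioo θ 1, 0 < f s)

/-- The primitive `F(s) = ∫₀ˢ f`. -/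
def Fprim (f : ℝ → ℝ) (s : ℝ) : ℝ := ∫ σ in (0:ℝ)..s, f σ

/-- The radial cut-off function `v_δ`: equal to `1` on the ball of radius `(1-δ)R`,
affine in `‖x‖` on the annulus `(1-δ)R < ‖x‖ ≤ R`, and `0` outside the ball of radius `R`. -/
def vcut {N : ℕ} (δ R : ℝ) (x : EuclideanSpace ℝ (Fin N)) : ℝ :=
  if ‖x‖ ≤ (1 - δ) * R then 1 else if ‖x‖ ≤ R then (R - ‖x‖) / (δ * R) else 0

lemma Fprim_continuous {f : ℝ → ℝ} (hf : Continuous f) : Continuous (Fprim f) :=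
  intervalIntegral.continuous_primitive (fun _ _ => hf.intervalIntegrable _ _) 0

lemma Fprim_min {f : ℝ → ℝ} {θ : ℝ} (hf : Bistable f θ) :
    ∀ s ∈ Set.Icc (0:ℝ) 1, Fprim f θ ≤ Fprim f s := by
  obtain ⟨hθ, hreg, hf0, hfθ, hf1, _, _, _, hneg, hpos⟩ := hf
  have hc : Continuous f := hreg.continuous
  have hii : ∀ a b : ℝ, IntervalIntegrable f volume a b := fun a b => hc.intervalIntegrable a b
  have hnp : ∀ u ∈ Set.Icc (0:ℝ) θ, f u ≤ 0 := by
    intro u hu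
    rcases eq_or_lt_of_le hu.1 with h0 | h0
    · rw [← h0, hf0]
    rcases eq_or_lt_of_le hu.2 with h1 | h1
    · rw [h1, hfθ]
    · exact (hneg u ⟨h0, h1⟩).le
  have hnn : ∀ u ∈ Set.Icc θ (1:ℝ), 0 ≤ f u := by
    intro u hu
    rcases eq_or_lt_of_le hu.1 with h0 | h0
    · rw [← h0, hfθ]
    rcases eq_or_lt_of_le hu.2 with h1 | h1
    · rw [h1, hf1]
    · exact (hpos u ⟨h0, h1⟩).le
  intro s hs
  rcases le_total s θ with h | h
  · have key : Fprim f s + ∫ σ in s..θ, f σ = Fprim f θ :=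
      intervalIntegral.integral_add_adjacent_intervals (hii 0 s) (hii s θ)
    have : ∫ σ in s..θ, f σ ≤ 0 := by
      have := intervalIntegral.integral_nonneg (f := fun u => -f u) (μ := volume) h
        (fun u hu => by
          have h2 := hnp u ⟨le_trans hs.1 hu.1, hu.2⟩
          show (0:ℝ) ≤ -f u
          linarith)
      rw [intervalIntegral.integral_neg] at this
      linarith
    linarith
  · have key : Fprim f θ + ∫ σ in θ..s, f σ = Fprim f s :=
      intervalIntegral.integral_add_adjacent_intervals (hii 0 θ) (hii θ s)
    have : 0 ≤ ∫ σ in θ..s, f σ :=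
      intervalIntegral.integral_nonneg h (fun u hu => hnn u ⟨hu.1, le_trans hu.2 hs.2⟩)
    linarith

lemma Fprim_theta_nonpos {f : ℝ → ℝ} {θ : ℝ} (hf : Bistable f θ) : Fprim f θ ≤ 0 := by
  have h := Fprim_min hf 0 ⟨le_refl 0, zero_le_one⟩
  have : Fprim f 0 = 0 := intervalIntegral.integral_same
  linarith

lemma vcut_mem_Icc {N : ℕ} {δ R : ℝ} (hδ0 : 0 < δ) (hδ1 : δ < 1) (hR : 0 < R)
    (x : EuclideanSpace ℝ (Fin N)) : vcut δ R x ∈ Set.Icc (0:ℝ) 1 := by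
  unfold vcut
  split_ifs with h1 h2
  · exact ⟨zero_le_one, le_refl 1⟩
  · push_neg at h1
    constructor
    · apply div_nonneg (by linarith) (by positivity)
    · rw [div_le_one (by positivity)]; nlinarith
  · exact ⟨le_refl 0, zero_le_one⟩

lemma fderiv_vcut_inner {N : ℕ} {δ R : ℝ} (x : EuclideanSpace ℝ (Fin N))
    (hx : ‖x‖ < (1 - δ) * R) : fderiv ℝ (vcut δ R) x = 0 := by
  have hU : IsOpen {y : EuclideanSpace ℝ (Fin N) | ‖y‖ < (1 - δ) * R} :=
    isOpen_lt continuous_norm continuous_const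
  have heq : vcut δ R =ᶠ[nhds x] fun _ => (1:ℝ) :=
    Filter.eventuallyEq_of_mem (hU.mem_nhds hx) (fun y hy => by
      simp only [vcut, if_pos (le_of_lt (show ‖y‖ < _ from hy))])
  rw [heq.fderiv_eq]
  exact fderiv_const_apply 1

lemma norm_fderiv_vcut_annulus {N : ℕ} (hN : 1 ≤ N) {δ R : ℝ} (hδ0 : 0 < δ) (hδ1 : δ < 1)
    (hR : 0 < R) (x : EuclideanSpace ℝ (Fin N)) (hx1 : (1 - δ) * R < ‖x‖) (hx2 : ‖x‖ < R) :
    ‖fderiv ℝ (vcut δ R) x‖ = (δ * R)⁻¹ := by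
  haveI : Nonempty (Fin N) := ⟨⟨0, hN⟩⟩
  have hx0 : x ≠ 0 := by
    intro h; rw [h, norm_zero] at hx1; nlinarith
  have hU : IsOpen {y : EuclideanSpace ℝ (Fin N) | (1 - δ) * R < ‖y‖ ∧ ‖y‖ < R} :=
    (isOpen_lt continuous_const continuous_norm).inter (isOpen_lt continuous_norm continuous_const)
  have heq : vcut δ R =ᶠ[nhds x] fun y => (R - ‖y‖) * (δ * R)⁻¹ :=
    Filter.eventuallyEq_of_mem (hU.mem_nhds ⟨hx1, hx2⟩) (fun y hy => by
      simp only [vcut, if_neg (not_le.2 hy.1), if_pos hy.2.le, div_eq_mul_inv])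
  have hD : DifferentiableAt ℝ (fun y : EuclideanSpace ℝ (Fin N) => ‖y‖) x :=
    (contDiffAt_norm ℝ hx0).differentiableAt one_ne_zero
  have hfd : HasFDerivAt (fun y : EuclideanSpace ℝ (Fin N) => (R - ‖y‖) * (δ * R)⁻¹)
      ((δ * R)⁻¹ • (-(fderiv ℝ (fun y : EuclideanSpace ℝ (Fin N) => ‖y‖) x))) x :=
    (hD.hasFDerivAt.const_sub R).mul_const _
  rw [heq.fderiv_eq, hfd.fderiv, norm_smul, norm_neg, norm_fderiv_norm hD]
  simp [abs_of_pos hR, abs_of_pos hδ0]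

/-- For the test function `v_δ`, bistable `f` with `F(1) > 0`, admissible
`δ`, and `μ` below the explicit threshold, the energy
`∫_B ½‖∇v_δ‖² - (1/μ)∫_B F(v_δ)` is negative. -/
theorem stmt4 {N : ℕ} (hN : 1 ≤ N) (R : ℝ) (hR : 0 < R)
    (B : Set (EuclideanSpace ℝ (Fin N))) (hB : B = Metric.ball (0 : EuclideanSpace ℝ (Fin N)) R)
    (m : ℝ) (hm : m = (volume B).toReal)
    (f : ℝ → ℝ) (θ : ℝ) (hf : Bistable f θ) (hF1 : 0 < Fprim f 1)
    (δ : ℝ) (hδ : δ ∈ Set.Ioo (0:ℝ) 1)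
    (hδ' : δ < 1 - (-(Fprim f θ) / (Fprim f 1 - Fprim f θ)) ^ ((1:ℝ)/(N:ℝ)))
    (μ : ℝ) (hμ0 : 0 < μ)
    (hμ : μ < 2 * δ ^ 2 * Real.Gamma ((N:ℝ)/2 + 1) ^ ((2:ℝ)/(N:ℝ)) *
      (Fprim f θ + (1 - δ) ^ N * (Fprim f 1 - Fprim f θ)) * m ^ ((2:ℝ)/(N:ℝ)) /
      (π * (1 - (1 - δ) ^ N))) :
    (∫ x in B, (1/2) * ‖fderiv ℝ (vcut δ R) x‖ ^ 2) -
      (1/μ) * ∫ x in B, Fprim f (vcut δ R x) < 0 := by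
  haveI : Nonempty (Fin N) := ⟨⟨0, hN⟩⟩
  obtain ⟨hδ0, hδ1⟩ := hδ
  have hNne : (N:ℝ) ≠ 0 := Nat.cast_ne_zero.2 (by omega)
  set r1 : ℝ := (1 - δ) * R with hr1def
  have hr1 : 0 < r1 := mul_pos (by linarith) hR
  have hr1R : r1 < R := by nlinarith
  set C : Set (EuclideanSpace ℝ (Fin N)) := Metric.closedBall 0 r1 with hCdef
  have hCB : C ⊆ B := by rw [hB]; exact Metric.closedBall_subset_ball hr1R
  have hBmeas : MeasurableSet B := hB ▸ measurableSet_ball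
  have hCmeas : MeasurableSet C := measurableSet_closedBall
  have hBfin : volume B ≠ ⊤ := hB ▸ measure_ball_lt_top.ne
  have hCfin : volume C ≠ ⊤ := measure_closedBall_lt_top.ne
  set m1 : ℝ := (volume C).toReal with hm1def
  -- volume computations
  have hγpos : 0 < Real.Gamma ((N:ℝ)/2 + 1) := Real.Gamma_pos_of_pos (by positivity)
  set s0 : ℝ := Real.sqrt π ^ N / Real.Gamma ((N:ℝ)/2 + 1) with hs0def
  have hs0pos : 0 < s0 := by
    apply div_pos _ hγpos
    exact pow_pos (Real.sqrt_pos.2 pi_pos) N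
  have hmeq : m = R ^ N * s0 := by
    rw [hm, hB, EuclideanSpace.volume_ball]
    rw [ENNReal.toReal_mul, ENNReal.toReal_pow, ENNReal.toReal_ofReal hR.le,
      ENNReal.toReal_ofReal (by positivity), Fintype.card_fin]
  have hm1eq : m1 = r1 ^ N * s0 := by
    rw [hm1def, hCdef, EuclideanSpace.volume_closedBall]
    rw [ENNReal.toReal_mul, ENNReal.toReal_pow, ENNReal.toReal_ofReal hr1.le,
      ENNReal.toReal_ofReal (by positivity), Fintype.card_fin]
  have hmpos : 0 < m := by rw [hmeq]; positivity
  have hm1m : m1 = (1 - δ) ^ N * m := by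
    rw [hmeq, hm1eq, hr1def, mul_pow]; ring
  have hvol_diff : (volume (B \ C)).toReal = m - m1 := by
    rw [measure_diff hCB hCmeas.nullMeasurableSet hCfin,
      ENNReal.toReal_sub_of_le (measure_mono hCB) hBfin, hm, hm1def]
  have hdiff_fin : volume (B \ C) ≠ ⊤ := fun h =>
    hBfin (eq_top_iff.2 (h ▸ measure_mono diff_subset))
  -- abbreviations
  set F1 : ℝ := Fprim f 1 with hF1def
  set Fθ : ℝ := Fprim f θ with hFθdef
  set P : ℝ := (1 - δ) ^ N with hPdef
  have hPpos : 0 < P := pow_pos (by linarith) N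
  have hP1 : P < 1 := pow_lt_one₀ (by linarith) (by linarith) (by omega)
  have hFθnp : Fθ ≤ 0 := Fprim_theta_nonpos hf
  -- K > 0
  set K : ℝ := Fθ + P * (F1 - Fθ) with hKdef
  have hF1θ : 0 < F1 - Fθ := by linarith
  have hKpos : 0 < K := by
    set a : ℝ := -Fθ / (F1 - Fθ) with hadef
    have ha0 : 0 ≤ a := div_nonneg (by linarith) hF1θ.le
    have h1 : a ^ ((1:ℝ)/(N:ℝ)) < 1 - δ := by linarith
    have h2 : a < P := by
      have h3 : (a ^ ((1:ℝ)/(N:ℝ))) ^ N < (1 - δ) ^ N :=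
        pow_lt_pow_left₀ h1 (Real.rpow_nonneg ha0 _) (by omega)
      have h4 : (a ^ ((1:ℝ)/(N:ℝ))) ^ N = a := by
        rw [← Real.rpow_natCast (a ^ ((1:ℝ)/(N:ℝ))) N, ← Real.rpow_mul ha0]
        rw [show (1:ℝ)/(N:ℝ) * (N:ℝ) = 1 by field_simp]
        exact Real.rpow_one a
      rwa [h4] at h3
    have h5 : a * (F1 - Fθ) = -Fθ := div_mul_cancel₀ _ hF1θ.ne'
    nlinarith [mul_lt_mul_of_pos_right h2 hF1θ]
  -- gradient integral
  have hsph : volume (Metric.sphere (0 : EuclideanSpace ℝ (Fin N)) r1) = 0 :=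
    Measure.addHaar_sphere volume 0 r1
  have h0ae : ∀ᵐ x : EuclideanSpace ℝ (Fin N), ¬ ‖x‖ = r1 := by
    rw [ae_iff]
    convert hsph using 2
    ext x
    simp [mem_sphere_zero_iff_norm]
  have hae : ∀ᵐ x : EuclideanSpace ℝ (Fin N), x ∈ B →
      (1/2) * ‖fderiv ℝ (vcut δ R) x‖ ^ 2 =
        (B \ C).indicator (fun _ => (1/2) * ((δ * R)⁻¹) ^ 2) x := by
    filter_upwards [h0ae] with x hx hxB
    have hxR : ‖x‖ < R := by
      rw [hB, mem_ball_zero_iff] at hxB; exact hxB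
    rcases lt_or_gt_of_ne hx with h | h
    · rw [fderiv_vcut_inner x h]
      have hxC : x ∈ C := mem_closedBall_zero_iff.2 h.le
      rw [Set.indicator_of_notMem (fun hc => hc.2 hxC)]
      simp
    · rw [norm_fderiv_vcut_annulus hN hδ0 hδ1 hR x h hxR,
        Set.indicator_of_mem (show x ∈ B \ C from
          ⟨hxB, fun hc => absurd (mem_closedBall_zero_iff.1 hc) (not_le.2 h)⟩) _]
  have I_grad : (∫ x in B, (1/2) * ‖fderiv ℝ (vcut δ R) x‖ ^ 2) =
      (m - m1) * ((1/2) * ((δ * R)⁻¹) ^ 2) := by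
    rw [setIntegral_congr_ae hBmeas hae, setIntegral_indicator (hBmeas.diff hCmeas),
      Set.inter_eq_self_of_subset_right diff_subset, setIntegral_const, measureReal_def, hvol_diff, smul_eq_mul]
  -- potential integral
  have hvm : Measurable (vcut δ R : EuclideanSpace ℝ (Fin N) → ℝ) := by
    unfold vcut
    exact Measurable.ite (measurableSet_le measurable_norm measurable_const) measurable_const
      (Measurable.ite (measurableSet_le measurable_norm measurable_const)
        ((measurable_const.sub measurable_norm).div_const _) measurable_const)
  have hFc : Continuous (Fprim f) := Fprim_continuous hf.2.1.continuous
  obtain ⟨Cb, hCb⟩ := isCompact_Icc.exists_bound_of_continuousOn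
    (s := Set.Icc (0:ℝ) 1) hFc.continuousOn
  have hIntB : IntegrableOn (fun x => Fprim f (vcut δ R x)) B volume := by
    apply Integrable.mono' (g := fun _ => Cb)
      (integrableOn_const hBfin)
      ((hFc.measurable.comp hvm).aestronglyMeasurable)
    filter_upwards with x
    exact hCb _ (vcut_mem_Icc hδ0 hδ1 hR x)
  have hIntC : IntegrableOn (fun x => Fprim f (vcut δ R x)) C volume := hIntB.mono_set hCB
  have hIntD : IntegrableOn (fun x => Fprim f (vcut δ R x)) (B \ C) volume :=
    hIntB.mono_set diff_subset
  have hsplit : (∫ x in B, Fprim f (vcut δ R x)) =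
      (∫ x in C, Fprim f (vcut δ R x)) + ∫ x in B \ C, Fprim f (vcut δ R x) := by
    rw [← setIntegral_union Set.disjoint_sdiff_right (hBmeas.diff hCmeas) hIntC hIntD,
      Set.union_diff_cancel hCB]
  have hC1 : (∫ x in C, Fprim f (vcut δ R x)) = m1 * F1 := by
    rw [setIntegral_congr_fun hCmeas (g := fun _ => F1) (fun x hx => by
      have hx' : ‖x‖ ≤ r1 := mem_closedBall_zero_iff.1 hx
      simp [vcut, show ‖x‖ ≤ (1 - δ) * R from hx', hF1def])]
    rw [setIntegral_const, smul_eq_mul, measureReal_def, hm1def]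
  have hC2 : Fθ * (m - m1) ≤ ∫ x in B \ C, Fprim f (vcut δ R x) := by
    have := setIntegral_ge_of_const_le_real (c := Fθ) (hBmeas.diff hCmeas) hdiff_fin
      (fun x _ => Fprim_min hf _ (vcut_mem_Icc hδ0 hδ1 hR x)) hIntD
    rw [measureReal_def, hvol_diff] at this
    linarith
  have hpot : m1 * F1 + Fθ * (m - m1) ≤ ∫ x in B, Fprim f (vcut δ R x) := by
    rw [hsplit, hC1]; linarith
  -- the radius identity
  have hR2 : Real.Gamma ((N:ℝ)/2 + 1) ^ ((2:ℝ)/(N:ℝ)) * m ^ ((2:ℝ)/(N:ℝ)) = π * R ^ 2 := by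
    have e1 : ((R:ℝ) ^ N) ^ ((2:ℝ)/(N:ℝ)) = R ^ 2 := by
      rw [← Real.rpow_natCast R N, ← Real.rpow_mul hR.le,
        show (N:ℝ) * ((2:ℝ)/(N:ℝ)) = 2 by field_simp]
      exact Real.rpow_two R
    have e2 : (Real.sqrt π ^ N) ^ ((2:ℝ)/(N:ℝ)) = π := by
      rw [← Real.rpow_natCast (Real.sqrt π) N, ← Real.rpow_mul (Real.sqrt_nonneg π),
        show (N:ℝ) * ((2:ℝ)/(N:ℝ)) = 2 by field_simp, Real.rpow_two]
      exact Real.sq_sqrt pi_pos.le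
    have hγne : Real.Gamma ((N:ℝ)/2 + 1) ^ ((2:ℝ)/(N:ℝ)) ≠ 0 :=
      (Real.rpow_pos_of_pos hγpos _).ne'
    rw [hmeq, hs0def, Real.mul_rpow (by positivity) (by positivity),
      Real.div_rpow (by positivity) hγpos.le, e1, e2]
    field_simp
  -- convert hμ
  have h1P : 0 < 1 - P := by linarith
  have hμ' : μ < 2 * δ ^ 2 * R ^ 2 * K / (1 - P) := by
    have e : 2 * δ ^ 2 * Real.Gamma ((N:ℝ)/2 + 1) ^ ((2:ℝ)/(N:ℝ)) * K * m ^ ((2:ℝ)/(N:ℝ)) /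
        (π * (1 - P)) = 2 * δ ^ 2 * R ^ 2 * K / (1 - P) := by
      rw [show 2 * δ ^ 2 * Real.Gamma ((N:ℝ)/2 + 1) ^ ((2:ℝ)/(N:ℝ)) * K * m ^ ((2:ℝ)/(N:ℝ))
        = Real.Gamma ((N:ℝ)/2 + 1) ^ ((2:ℝ)/(N:ℝ)) * m ^ ((2:ℝ)/(N:ℝ)) * (2 * δ ^ 2 * K) by ring,
        hR2]
      rw [div_eq_div_iff (by positivity) h1P.ne']
      ring
    rw [← e]
    exact hμ
  have hμ2 : μ * (1 - P) < 2 * δ ^ 2 * R ^ 2 * K := by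
    rw [lt_div_iff₀ h1P] at hμ'
    exact hμ'
  -- final arithmetic
  have key : m * (1 - P) * μ < (m1 * F1 + Fθ * (m - m1)) * (2 * (δ * R) ^ 2) := by
    have h6 := mul_lt_mul_of_pos_left hμ2 hmpos
    have e7 : (m1 * F1 + Fθ * (m - m1)) * (2 * (δ * R) ^ 2) = m * (2 * δ ^ 2 * R ^ 2 * K) := by
      rw [hm1m]; ring
    calc m * (1 - P) * μ = m * (μ * (1 - P)) := by ring
      _ < m * (2 * δ ^ 2 * R ^ 2 * K) := h6
      _ = (m1 * F1 + Fθ * (m - m1)) * (2 * (δ * R) ^ 2) := e7.symm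
  have h3 : (m - m1) * ((1/2) * ((δ * R)⁻¹) ^ 2) < (1/μ) * (m1 * F1 + Fθ * (m - m1)) := by
    have e : (m - m1) * ((1/2) * ((δ * R)⁻¹) ^ 2) = (m * (1 - P)) / (2 * (δ * R) ^ 2) := by
      rw [hm1m]
      field_simp
    have e2 : (1/μ) * (m1 * F1 + Fθ * (m - m1)) = (m1 * F1 + Fθ * (m - m1)) / μ := by ring
    rw [e, e2, div_lt_div_iff₀ (by positivity) hμ0]
    exact key
  have hmono : (1/μ) * (m1 * F1 + Fθ * (m - m1)) ≤ (1/μ) * ∫ x in B, Fprim f (vcut δ R x) :=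
    mul_le_mul_of_nonneg_left hpot (by positivity)
  rw [I_grad]
  linarith
end
end

section
/- Let N ≥ 1 be an integer, R > 0, and let B ⊆ ℝᴺ be the open Euclidean ball of radius R centered at the origin, of volume m. Let f be bistable with threshold θ ∈ (0,1), let δ ∈ (0,1), and define v_δ : ℝᴺ → ℝ by v_δ(x) = 1 if ‖x‖ ≤ (1-δ)R, v_δ(x) = (R - ‖x‖)/(δR) if (1-δ)R < ‖x‖ ≤ R, and v_δ(x) = 0 if ‖x‖ > R. Then ∫_B F(v_δ(x)) dx ≥ m·(F(θ) + (1-δ)^N·(F(1) - F(θ))). -/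
open Set MeasureTheory Real

noncomputable section

/-- Lower bound for the potential energy of the test function `v_δ`:
`∫_B F(v_δ) ≥ m·(F(θ) + (1-δ)^N (F(1) - F(θ)))` where `m` is the volume of `B`. -/
theorem stmt5 {N : ℕ} (hN : 1 ≤ N) (R : ℝ) (hR : 0 < R)
    (B : Set (EuclideanSpace ℝ (Fin N))) (hB : B = Metric.ball (0 : EuclideanSpace ℝ (Fin N)) R)
    (m : ℝ) (hm : m = (volume B).toReal)
    (f : ℝ → ℝ) (θ : ℝ) (hf : Bistable f θ)
    (δ : ℝ) (hδ : δ ∈ Set.Ioo (0:ℝ) 1) :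
    m * (Fprim f θ + (1 - δ) ^ N * (Fprim f 1 - Fprim f θ)) ≤
      ∫ x in B, Fprim f (vcut δ R x) := by
  obtain ⟨hθ, hfC1, hf0, hfθ, hf1, _, _, _, hneg, hpos⟩ := hf
  have hfc : Continuous f := hfC1.continuous
  have hδ0 : (0:ℝ) < δ := hδ.1
  have hδ1 : δ < 1 := hδ.2
  have h1δ : (0:ℝ) < 1 - δ := by linarith
  have hδR : 0 < δ * R := mul_pos hδ0 hR
  -- continuity of the primitive
  have hFc : Continuous (Fprim f) :=
    intervalIntegral.continuous_primitive (fun a b => hfc.intervalIntegrable a b) 0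
  -- `F θ` is the minimum of `F` on `[0,1]`
  have hmin : ∀ s ∈ Icc (0:ℝ) 1, Fprim f θ ≤ Fprim f s := by
    intro s hs
    rcases le_or_gt θ s with h | h
    · have heq : Fprim f s - Fprim f θ = ∫ σ in θ..s, f σ :=
        intervalIntegral.integral_interval_sub_left (hfc.intervalIntegrable 0 s)
          (hfc.intervalIntegrable 0 θ)
      have hnn : 0 ≤ ∫ σ in θ..s, f σ := by
        refine intervalIntegral.integral_nonneg h (fun u hu => ?_)
        rcases eq_or_lt_of_le hu.1 with h1 | h1
        · simp [← h1, hfθ]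
        · rcases lt_or_eq_of_le (hu.2.trans hs.2) with h2 | h2
          · exact (hpos u ⟨h1, h2⟩).le
          · simp [h2, hf1]
      linarith
    · have heq : Fprim f θ - Fprim f s = ∫ σ in s..θ, f σ :=
        intervalIntegral.integral_interval_sub_left (hfc.intervalIntegrable 0 θ)
          (hfc.intervalIntegrable 0 s)
      have hnp : 0 ≤ ∫ σ in s..θ, -f σ := by
        refine intervalIntegral.integral_nonneg h.le (fun u hu => ?_)
        simp only [Pi.neg_apply, neg_nonneg]
        rcases eq_or_lt_of_le (hs.1.trans hu.1 : (0:ℝ) ≤ u) with h1 | h1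
        · simp [← h1, hf0]
        · rcases lt_or_eq_of_le hu.2 with h2 | h2
          · exact (hneg u ⟨h1, h2⟩).le
          · simp [h2, hfθ]
      rw [intervalIntegral.integral_neg] at hnp
      linarith
  -- `vcut` takes values in `[0,1]`
  have hv01 : ∀ x : EuclideanSpace ℝ (Fin N), vcut δ R x ∈ Icc (0:ℝ) 1 := by
    intro x
    unfold vcut
    split_ifs with h1 h2
    · exact ⟨zero_le_one, le_rfl⟩
    · push_neg at h1
      constructor
      · exact div_nonneg (by linarith) hδR.le
      · rw [div_le_one hδR]
        nlinarith
    · exact ⟨le_rfl, zero_le_one⟩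
  -- measurability of `vcut`
  have hvm : Measurable (vcut (N := N) δ R) := by
    unfold vcut
    refine Measurable.ite (measurableSet_le measurable_norm measurable_const) measurable_const
      (Measurable.ite (measurableSet_le measurable_norm measurable_const) ?_ measurable_const)
    exact (measurable_const.sub measurable_norm).div_const _
  -- basic facts about `B`
  have hBmeas : MeasurableSet B := hB ▸ measurableSet_ball
  have hBfin : volume B ≠ ⊤ := by rw [hB]; exact measure_ball_lt_top.ne
  haveI : IsFiniteMeasure (volume.restrict B) :=
    ⟨by rwa [Measure.restrict_apply_univ, lt_top_iff_ne_top]⟩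
  -- integrability
  obtain ⟨Cb, hCb⟩ := (isCompact_Icc (a := (0:ℝ)) (b := 1)).exists_bound_of_continuousOn
    hFc.continuousOn
  have hint : IntegrableOn (fun x => Fprim f (vcut δ R x)) B volume := by
    refine ⟨(hFc.measurable.comp hvm).aestronglyMeasurable.restrict, ?_⟩
    exact HasFiniteIntegral.of_bounded (C := Cb) (ae_of_all _ fun x => hCb _ (hv01 x))
  -- the inner ball
  set C : Set (EuclideanSpace ℝ (Fin N)) :=
    Metric.closedBall (0 : EuclideanSpace ℝ (Fin N)) ((1 - δ) * R) with hCdef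
  have hCB : C ⊆ B := by
    rw [hB]
    exact Metric.closedBall_subset_ball (by nlinarith)
  have hCmeas : MeasurableSet C := measurableSet_closedBall
  -- volumes
  haveI : Nonempty (Fin N) := ⟨⟨0, hN⟩⟩
  have hfr : Module.finrank ℝ (EuclideanSpace ℝ (Fin N)) = N := finrank_euclideanSpace_fin
  have hball1 : (volume (Metric.ball (0 : EuclideanSpace ℝ (Fin N)) 1)).toReal
      = (volume (Metric.ball (0 : EuclideanSpace ℝ (Fin N)) 1)).toReal := rfl
  have hvolB : volume B
      = ENNReal.ofReal (R ^ N) * volume (Metric.ball (0 : EuclideanSpace ℝ (Fin N)) 1) := by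
    rw [hB, Measure.addHaar_ball _ _ hR.le, hfr]
  have hvolC : volume C
      = ENNReal.ofReal (((1 - δ) * R) ^ N)
        * volume (Metric.ball (0 : EuclideanSpace ℝ (Fin N)) 1) := by
    rw [hCdef, Measure.addHaar_closedBall _ _ (by positivity), hfr]
  have hCm : (volume C).toReal = (1 - δ) ^ N * m := by
    rw [hm, hvolB, hvolC, ENNReal.toReal_mul, ENNReal.toReal_mul,
      ENNReal.toReal_ofReal (by positivity), ENNReal.toReal_ofReal (by positivity), mul_pow]
    ring
  have hCfin : volume C ≠ ⊤ := (lt_of_le_of_lt (measure_mono hCB) hBfin.lt_top).ne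
  have hdiff : (volume (B \ C)).toReal = m - (volume C).toReal := by
    rw [measure_diff hCB hCmeas.nullMeasurableSet hCfin,
      ENNReal.toReal_sub_of_le (measure_mono hCB) hBfin, hm]
  -- split the integral
  have hsplit : ∫ x in B, Fprim f (vcut δ R x)
      = (∫ x in C, Fprim f (vcut δ R x)) + ∫ x in B \ C, Fprim f (vcut δ R x) := by
    rw [← setIntegral_union disjoint_sdiff_right (hBmeas.diff hCmeas)
      (hint.mono_set hCB) (hint.mono_set diff_subset), union_diff_cancel hCB]
  -- value on the inner ball
  have hvC : EqOn (fun x => Fprim f (vcut δ R x)) (fun _ => Fprim f 1) C := by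
    intro x hx
    have hx' : ‖x‖ ≤ (1 - δ) * R := by
      simpa [hCdef, mem_closedBall_zero_iff] using hx
    simp [vcut, hx']
  have h1 : ∫ x in C, Fprim f (vcut δ R x) = Fprim f 1 * (volume C).toReal := by
    rw [setIntegral_congr_fun hCmeas hvC, setIntegral_const, smul_eq_mul, mul_comm]
    rfl
  -- lower bound on the annulus
  have h2 : Fprim f θ * (volume (B \ C)).toReal ≤ ∫ x in B \ C, Fprim f (vcut δ R x) := by
    refine setIntegral_ge_of_const_le_real (hBmeas.diff hCmeas)
      ((lt_of_le_of_lt (measure_mono diff_subset) hBfin.lt_top).ne)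
      (fun x _ => hmin _ (hv01 x)) (hint.mono_set diff_subset)
  -- conclude
  rw [hsplit, h1, hCm]
  rw [hdiff, hCm] at h2
  linarith [h2]
end
end

section
/- Let N ≥ 1 be an integer, let Ω ⊆ ℝᴺ be a nonempty bounded open set, let μ > 0, and let f be bistable with threshold θ ∈ (0,1). If u is a classical solution of -μΔu = f(u) in Ω with boundary value 0 satisfying 0 < u(x) < 1 for all x ∈ Ω, then there exists x ∈ Ω with u(x) > θ; equivalently, the maximum of u over the closure of Ω is strictly greater than θ. -/
open Set MeasureTheory Real

noncomputable section

/-- The Laplacian of `u : ℝᴺ → ℝ` at `x`, as the sum of second directional derivatives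
along the coordinate directions. -/
def lap {N : ℕ} (u : EuclideanSpace ℝ (Fin N) → ℝ) (x : EuclideanSpace ℝ (Fin N)) : ℝ :=
  ∑ i : Fin N, fderiv ℝ (fun y => fderiv ℝ u y (EuclideanSpace.single i 1)) x
    (EuclideanSpace.single i 1)

/-- A classical solution of `-μ Δu = f(u)` in `Ω` with boundary value `g`. -/
def IsClassicalSolution {N : ℕ} (Ω : Set (EuclideanSpace ℝ (Fin N))) (μ : ℝ) (f : ℝ → ℝ)
    (g : EuclideanSpace ℝ (Fin N) → ℝ) (u : EuclideanSpace ℝ (Fin N) → ℝ) : Prop :=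
  ContinuousOn u (closure Ω) ∧
  (∀ x ∈ Ω, DifferentiableAt ℝ u x) ∧
  (∀ x ∈ Ω, DifferentiableAt ℝ (fderiv ℝ u) x) ∧
  (∀ x ∈ Ω, μ * lap u x + f (u x) = 0) ∧
  (∀ x ∈ frontier Ω, u x = g x)

/-- `Ω` has `C²` boundary: near every boundary point there is a `C²` defining function. -/
def HasC2Boundary {N : ℕ} (Ω : Set (EuclideanSpace ℝ (Fin N))) : Prop :=
  ∀ x ∈ frontier Ω, ∃ (ε : ℝ) (φ : EuclideanSpace ℝ (Fin N) → ℝ), 0 < ε ∧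
    ContDiffOn ℝ 2 φ (Metric.ball x ε) ∧
    (∀ y ∈ Metric.ball x ε, fderiv ℝ φ y ≠ 0) ∧
    (∀ y ∈ Metric.ball x ε, (y ∈ Ω ↔ φ y < 0)) ∧
    (∀ y ∈ Metric.ball x ε, (y ∈ frontier Ω ↔ φ y = 0))

/-- `f` is a monostable nonlinearity. -/
def Monostable (f : ℝ → ℝ) : Prop :=
  ContDiff ℝ 1 f ∧ f 0 = 0 ∧ f 1 = 0 ∧
  0 < deriv f 0 ∧ deriv f 1 < 0 ∧ (∀ s ∈ Set.Ioo (0:ℝ) 1, 0 < f s)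

lemma second_deriv_test_max {g G : ℝ → ℝ} {c δ : ℝ} (hδ : 0 < δ)
    (hmax : ∀ t ∈ Set.Ioo (-δ) δ, g t ≤ g 0)
    (hg : ∀ t ∈ Set.Ioo (-δ) δ, HasDerivAt g (G t) t)
    (hG : HasDerivAt G c 0) : c ≤ 0 := by
  have h0 : (0:ℝ) ∈ Set.Ioo (-δ) δ := by constructor <;> linarith
  have hloc : IsLocalMax g 0 := by
    filter_upwards [Ioo_mem_nhds (by linarith : -δ < 0) hδ] with t ht using hmax t ht
  have hG0 : G 0 = 0 := by
    have := hloc.deriv_eq_zero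
    rw [(hg 0 h0).deriv] at this
    exact this
  by_contra hc
  push_neg at hc
  have hslope : Filter.Tendsto (fun t => G t / t) (nhdsWithin 0 {(0:ℝ)}ᶜ) (nhds c) := by
    have := hasDerivAt_iff_tendsto_slope.mp hG
    refine this.congr' ?_
    filter_upwards [self_mem_nhdsWithin] with t ht
    simp [slope, hG0, div_eq_inv_mul]
  have hslope' : Filter.Tendsto (fun t => G t / t) (nhdsWithin 0 (Set.Ioi 0)) (nhds c) :=
    hslope.mono_left (nhdsWithin_mono 0 (fun x hx => ne_of_gt hx))
  have hev : ∀ᶠ t in nhdsWithin 0 (Set.Ioi (0:ℝ)), 0 < G t := by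
    filter_upwards [hslope'.eventually (eventually_gt_nhds (half_lt_self hc)),
      self_mem_nhdsWithin] with t h1 h2
    have h3 : 0 < G t / t := lt_trans (half_pos hc) h1
    have := mul_pos h3 h2
    rwa [div_mul_cancel₀ _ (ne_of_gt h2)] at this
  rw [eventually_nhdsWithin_iff, Metric.eventually_nhds_iff] at hev
  obtain ⟨δ₂, hδ₂, hev⟩ := hev
  set b := min δ δ₂ / 2 with hb
  have hbpos : 0 < b := by positivity
  have hbδ : b < δ := by
    have := min_le_left δ δ₂; simp only [hb]; linarith
  have hbδ₂ : b < δ₂ := by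
    have := min_le_right δ δ₂; simp only [hb]; linarith
  have hsub : Set.Icc (0:ℝ) b ⊆ Set.Ioo (-δ) δ := fun t ht =>
    ⟨by linarith [ht.1], by linarith [ht.2]⟩
  have hmono : StrictMonoOn g (Set.Icc 0 b) := by
    refine strictMonoOn_of_deriv_pos (convex_Icc 0 b)
      (fun t ht => (hg t (hsub ht)).continuousAt.continuousWithinAt) ?_
    intro t ht
    rw [interior_Icc] at ht
    rw [(hg t (hsub (Ioo_subset_Icc_self ht))).deriv]
    refine hev ?_ ht.1
    rw [Real.dist_eq, sub_zero, abs_of_pos ht.1]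
    linarith [ht.2]
  have : g 0 < g b := hmono (Set.left_mem_Icc.mpr hbpos.le)
    (Set.right_mem_Icc.mpr hbpos.le) hbpos
  have := hmax b ⟨by linarith, hbδ⟩
  linarith

lemma no_interior_max {N : ℕ} (hN : 1 ≤ N) {Ω : Set (EuclideanSpace ℝ (Fin N))}
    (hΩo : IsOpen Ω) {u : EuclideanSpace ℝ (Fin N) → ℝ}
    (hu1 : ∀ x ∈ Ω, DifferentiableAt ℝ u x)
    (hu2 : ∀ x ∈ Ω, DifferentiableAt ℝ (fderiv ℝ u) x)
    {z : EuclideanSpace ℝ (Fin N)} (hz : z ∈ Ω) {ε : ℝ} (hε : 0 < ε)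
    (hzmax : ∀ y ∈ closure Ω, u y + ε * ‖y‖^2 ≤ u z + ε * ‖z‖^2)
    (hlap : 0 ≤ lap u z) : False := by
  obtain ⟨δ, hδpos, hball⟩ := Metric.isOpen_iff.mp hΩo z hz
  have key : ∀ i : Fin N,
      fderiv ℝ (fun y => fderiv ℝ u y (EuclideanSpace.single i 1)) z
        (EuclideanSpace.single i 1) + 2*ε ≤ 0 := by
    intro i
    set e := EuclideanSpace.single i (1:ℝ) with he_def
    have he : ‖e‖ = 1 := by simp [he_def]
    have hLmem : ∀ t ∈ Set.Ioo (-δ) δ, z + t • e ∈ Ω := by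
      intro t ht
      apply hball
      rw [Metric.mem_ball, dist_eq_norm]
      have : z + t • e - z = t • e := by abel
      rw [this, norm_smul, he, mul_one]
      rw [Real.norm_eq_abs, abs_lt]
      exact ⟨ht.1, ht.2⟩
    have hL : ∀ t : ℝ, HasDerivAt (fun s : ℝ => z + s • e) e t := by
      intro t
      simpa using ((hasDerivAt_id t).smul_const e).const_add z
    set k : ℝ := inner ℝ z e with hk
    have hnorm : ∀ t : ℝ, ‖z + t • e‖^2 = ‖z‖^2 + 2*k*t + t^2 := by
      intro t
      rw [norm_add_sq_real, real_inner_smul_right, norm_smul, he, mul_one,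
        Real.norm_eq_abs, sq_abs, hk]
      ring
    set g : ℝ → ℝ := fun t => u (z + t • e) + ε * ‖z + t • e‖^2 with hgdef
    set G : ℝ → ℝ := fun t => fderiv ℝ u (z + t • e) e + (2*ε*k + 2*ε*t) with hGdef
    have hg : ∀ t ∈ Set.Ioo (-δ) δ, HasDerivAt g (G t) t := by
      intro t ht
      have hw : HasDerivAt (fun s : ℝ => u (z + s • e)) (fderiv ℝ u (z + t • e) e) t :=
        (hu1 _ (hLmem t ht)).hasFDerivAt.comp_hasDerivAt t (hL t)
      have hq : HasDerivAt (fun s : ℝ => ε * ‖z + s • e‖^2) (2*ε*k + 2*ε*t) t := by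
        have h1 : HasDerivAt (fun s : ℝ => ε * (‖z‖^2 + 2*k*s + s^2)) (ε * (2*k + 2*t)) t := by
          have h2 : HasDerivAt (fun s : ℝ => ‖z‖^2 + 2*k*s + s^2) (2*k + 2*t) t := by
            have h3 := (((hasDerivAt_id t).const_mul (2*k)).const_add (‖z‖^2)).add
              (hasDerivAt_pow 2 t)
            refine h3.congr_deriv ?_
            simp
          exact h2.const_mul ε
        have heq : (fun s : ℝ => ε * ‖z + s • e‖^2) = fun s : ℝ => ε * (‖z‖^2 + 2*k*s + s^2) := by
          funext s; rw [hnorm s]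
        rw [heq]
        convert h1 using 1
        ring
      have := hw.add hq
      exact this
    have hmax : ∀ t ∈ Set.Ioo (-δ) δ, g t ≤ g 0 := by
      intro t ht
      have h1 := hzmax (z + t • e) (subset_closure (hLmem t ht))
      have h0 : z + (0:ℝ) • e = z := by simp
      simp only [hgdef, h0]
      exact h1
    have hGd : HasDerivAt G (fderiv ℝ (fun y => fderiv ℝ u y e) z e + 2*ε) 0 := by
      have hF : DifferentiableAt ℝ (fun y => fderiv ℝ u y e) z :=
        (hu2 z hz).clm_apply (differentiableAt_const e)
      have h1 : HasDerivAt (fun t : ℝ => fderiv ℝ u (z + t • e) e)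
          (fderiv ℝ (fun y => fderiv ℝ u y e) z e) 0 := by
        have h0 : z + (0:ℝ) • e = z := by simp
        have hFz : HasFDerivAt (fun y => fderiv ℝ u y e)
            (fderiv ℝ (fun y => fderiv ℝ u y e) z) (z + (0:ℝ) • e) := by
          rw [h0]; exact hF.hasFDerivAt
        have h2 := hFz.comp_hasDerivAt 0 (hL 0)
        simp only [Function.comp_def, h0] at h2
        exact h2
      have h2 : HasDerivAt (fun t : ℝ => 2*ε*k + 2*ε*t) (2*ε) 0 := by
        simpa using ((hasDerivAt_id (0:ℝ)).const_mul (2*ε)).const_add (2*ε*k)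
      exact h1.add h2
    exact second_deriv_test_max hδpos hmax hg hGd
  have hsum := Finset.sum_nonpos (fun i (_ : i ∈ Finset.univ) => key i)
  rw [Finset.sum_add_distrib, Finset.sum_const, Finset.card_univ, Fintype.card_fin,
    nsmul_eq_mul] at hsum
  have hlap' : lap u z + (N:ℝ) * (2*ε) ≤ 0 := hsum
  have hN1 : (1:ℝ) ≤ (N:ℝ) := by exact_mod_cast hN
  nlinarith

/-- Any barrier (classical solution of `-μΔu = f(u)` in `Ω` with boundary
value `0` and `0 < u < 1` in `Ω`) for a bistable `f` exceeds `θ` somewhere; equivalently,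
its maximum over the closure of `Ω` is strictly greater than `θ`. -/
theorem stmt6 {N : ℕ} (hN : 1 ≤ N) (Ω : Set (EuclideanSpace ℝ (Fin N)))
    (hΩne : Ω.Nonempty) (hΩb : Bornology.IsBounded Ω) (hΩo : IsOpen Ω)
    (μ : ℝ) (hμ : 0 < μ) (f : ℝ → ℝ) (θ : ℝ) (hf : Bistable f θ)
    (u : EuclideanSpace ℝ (Fin N) → ℝ)
    (hu : IsClassicalSolution Ω μ f (fun _ => 0) u)
    (hu01 : ∀ x ∈ Ω, 0 < u x ∧ u x < 1) :
    (∃ x ∈ Ω, θ < u x) ∧ θ < sSup (u '' closure Ω) := by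
  obtain ⟨huc, hu1, hu2, heq, hbd⟩ := hu
  obtain ⟨hθIoo, -, -, hfθ, -, -, -, -, hneg, -⟩ := hf
  have hcomp : IsCompact (closure Ω) := hΩb.isCompact_closure
  have main : ¬ (∀ x ∈ Ω, u x ≤ θ) := by
    intro hall
    have hlap : ∀ x ∈ Ω, 0 ≤ lap u x := by
      intro x hx
      have he := heq x hx
      have hfu : f (u x) ≤ 0 := by
        rcases lt_or_eq_of_le (hall x hx) with h | h
        · exact le_of_lt (hneg (u x) ⟨(hu01 x hx).1, h⟩)
        · rw [h, hfθ]
      by_contra hcon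
      push_neg at hcon
      nlinarith
    obtain ⟨R, hR⟩ := hΩb.subset_closedBall 0
    have hRx : ∀ x ∈ closure Ω, ‖x‖ ≤ R := by
      intro x hx
      have h1 : closure Ω ⊆ Metric.closedBall 0 R :=
        closure_minimal hR Metric.isClosed_closedBall
      simpa using h1 hx
    obtain ⟨x₀, hx₀⟩ := hΩne
    have hR0 : 0 ≤ R := le_trans (norm_nonneg x₀) (hRx x₀ (subset_closure hx₀))
    have key : ∀ ε > (0:ℝ), u x₀ ≤ ε * R^2 := by
      intro ε hε
      have hvc : ContinuousOn (fun x => u x + ε * ‖x‖^2) (closure Ω) :=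
        huc.add ((continuous_const.mul (continuous_norm.pow 2)).continuousOn)
      obtain ⟨z, hzc, hzmax⟩ := hcomp.exists_isMaxOn ⟨x₀, subset_closure hx₀⟩ hvc
      by_cases hzΩ : z ∈ Ω
      · exact absurd (hlap z hzΩ)
          (fun h => no_interior_max hN hΩo hu1 hu2 hzΩ hε (fun y hy => hzmax hy) h)
      · have hzf : z ∈ frontier Ω := by
          rw [hΩo.frontier_eq]; exact ⟨hzc, hzΩ⟩
        have huz : u z = 0 := hbd z hzf
        have h1 := hzmax (subset_closure hx₀)
        simp only [mem_setOf_eq] at h1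
        have h2 : ‖z‖ ≤ R := hRx z hzc
        have h3 : (0:ℝ) ≤ ‖x₀‖^2 := sq_nonneg _
        have h4 : ‖z‖^2 ≤ R^2 := by nlinarith [norm_nonneg z]
        nlinarith
    have hpos := (hu01 x₀ hx₀).1
    have hk := key (u x₀ / (2*(R^2+1))) (by positivity)
    have hRR : (0:ℝ) < R^2 + 1 := by positivity
    rw [div_mul_eq_mul_div, le_div_iff₀ (by positivity)] at hk
    nlinarith
  push_neg at main
  obtain ⟨x, hx, hθx⟩ := main
  refine ⟨⟨x, hx, hθx⟩, ?_⟩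
  have hbdd : BddAbove (u '' closure Ω) := hcomp.bddAbove_image huc
  exact lt_of_lt_of_le hθx (le_csSup hbdd ⟨x, subset_closure hx, rfl⟩)
end
end

section
/- Let N ≥ 1 be an integer, let Ω ⊆ ℝᴺ be a bounded open set with C² boundary, let μ > 0, and let f be bistable with threshold θ ∈ (0,1) and F(1) = 0. If u is a classical solution of -μΔu = f(u) in Ω with boundary value 1 satisfying 0 ≤ u(x) ≤ 1 for all x ∈ Ω, then u(x) = 1 for every x in the closure of Ω. -/
open Set MeasureTheory Real

noncomputable section

set_option maxHeartbeats 2000000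

open Filter in
/-- If `f p = 0` and `f' (p) < 0` then `f > 0` just left of `p` and `f < 0` just right. -/
lemma sign_near_of_deriv_neg {f : ℝ → ℝ} {p d : ℝ} (hd : HasDerivAt f d p) (hneg : d < 0)
    (hfp : f p = 0) :
    ∃ δ > 0, (∀ t, p - δ < t → t < p → 0 < f t) ∧ (∀ t, p < t → t < p + δ → f t < 0) := by
  have hs := hasDerivAt_iff_tendsto_slope.1 hd
  have hev : ∀ᶠ t in nhdsWithin p {p}ᶜ, slope f p t < 0 := by
    have : Iio (0:ℝ) ∈ nhds d := Iio_mem_nhds hneg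
    exact hs.eventually this
  rw [eventually_nhdsWithin_iff] at hev
  rcases Metric.eventually_nhds_iff.1 hev with ⟨δ, hδ, hball⟩
  refine ⟨δ, hδ, ?_, ?_⟩
  · intro t h1 h2
    have hne : t ∈ ({p}ᶜ : Set ℝ) := by simp; linarith
    have hdist : dist t p < δ := by rw [Real.dist_eq, abs_lt]; constructor <;> linarith
    have := hball hdist hne
    rw [slope_def_field] at this
    have htp : t - p < 0 := by linarith
    have : (f t - f p) / (t - p) < 0 := by
      simpa [div_eq_div_iff] using this
    rw [hfp, sub_zero] at this
    rcases div_neg_iff.1 this with ⟨h, h'⟩ | ⟨h, h'⟩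
    · exact h
    · linarith
  · intro t h1 h2
    have hne : t ∈ ({p}ᶜ : Set ℝ) := by simp; linarith
    have hdist : dist t p < δ := by rw [Real.dist_eq, abs_lt]; constructor <;> linarith
    have := hball hdist hne
    rw [slope_def_field] at this
    have : (f t - f p) / (t - p) < 0 := this
    rw [hfp, sub_zero] at this
    have htp : 0 < t - p := by linarith
    rcases div_neg_iff.1 this with ⟨h, h'⟩ | ⟨h, h'⟩
    · linarith
    · exact h

/-- At an interior local minimum, a pointwise second derivative is nonnegative. -/
lemma second_deriv_nonneg_of_isLocalMin {g h : ℝ → ℝ} {D : ℝ}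
    (hg : ∀ᶠ t in nhds (0:ℝ), HasDerivAt g (h t) t)
    (hh : HasDerivAt h D 0) (hmin : IsLocalMin g 0) : 0 ≤ D := by
  by_contra hDneg
  push_neg at hDneg
  have h0 : h 0 = 0 := by
    have h1 : deriv g 0 = h 0 := hg.self_of_nhds.deriv
    have h2 : deriv g 0 = 0 := hmin.deriv_eq_zero
    linarith [h1 ▸ h2]
  obtain ⟨δ₁, hδ₁, -, hneg⟩ := sign_near_of_deriv_neg hh hDneg h0
  rcases Metric.eventually_nhds_iff.1 hg with ⟨δ₂, hδ₂, hgball⟩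
  rcases Metric.eventually_nhds_iff.1 (hmin : ∀ᶠ t in nhds 0, g 0 ≤ g t)
    with ⟨δ₃, hδ₃, hminball⟩
  set δ := min (min δ₁ δ₂) δ₃ with hδdef
  have hδ : 0 < δ := by positivity
  have hderiv : ∀ t ∈ Icc (0:ℝ) (δ/2), HasDerivAt g (h t) t := by
    intro t ht
    apply hgball
    rw [Real.dist_eq, abs_lt]
    rcases ht with ⟨ht1, ht2⟩
    constructor
    · linarith
    · have : δ ≤ δ₂ := le_trans (min_le_left _ _) (min_le_right _ _)
      linarith
  have hanti : StrictAntiOn g (Icc (0:ℝ) (δ/2)) := by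
    apply strictAntiOn_of_deriv_neg (convex_Icc _ _)
    · intro t ht
      exact (hderiv t ht).continuousAt.continuousWithinAt
    · intro t ht
      rw [interior_Icc] at ht
      rw [(hderiv t ⟨ht.1.le, ht.2.le⟩).deriv]
      apply hneg t ht.1
      have : δ ≤ δ₁ := le_trans (min_le_left _ _) (min_le_left _ _)
      linarith [ht.2]
  have hlt : g (δ/2) < g 0 :=
    hanti (by constructor <;> [linarith; linarith]) (by constructor <;> linarith) (by linarith)
  have hge : g 0 ≤ g (δ/2) := by
    apply hminball
    rw [Real.dist_eq, abs_lt]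
    have : δ ≤ δ₃ := min_le_right _ _
    constructor <;> linarith
  linarith

lemma hasFDerivAt_fderiv_apply {N : ℕ} {v : EuclideanSpace ℝ (Fin N) → ℝ}
    {x : EuclideanSpace ℝ (Fin N)} (hd2 : DifferentiableAt ℝ (fderiv ℝ v) x)
    (w : EuclideanSpace ℝ (Fin N)) :
    HasFDerivAt (fun y => fderiv ℝ v y w)
      ((ContinuousLinearMap.apply ℝ ℝ w).comp (fderiv ℝ (fderiv ℝ v) x)) x :=
  (ContinuousLinearMap.apply ℝ ℝ w).hasFDerivAt.comp x hd2.hasFDerivAt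

open Filter in
/-- At an interior local minimum the (pointwise) Laplacian is nonnegative. -/
lemma lap_nonneg_of_isLocalMin {N : ℕ} {v : EuclideanSpace ℝ (Fin N) → ℝ}
    {x : EuclideanSpace ℝ (Fin N)}
    (hd : ∀ᶠ y in nhds x, DifferentiableAt ℝ v y)
    (hd2 : DifferentiableAt ℝ (fderiv ℝ v) x)
    (hmin : IsLocalMin v x) : 0 ≤ lap v x := by
  apply Finset.sum_nonneg
  intro i _
  set w := EuclideanSpace.single i (1:ℝ) with hw
  have hΦ := hasFDerivAt_fderiv_apply hd2 w
  have hsummand : fderiv ℝ (fun y => fderiv ℝ v y w) x w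
      = ((ContinuousLinearMap.apply ℝ ℝ w).comp (fderiv ℝ (fderiv ℝ v) x)) w := by
    rw [hΦ.fderiv]
  rw [hsummand]
  set γ : ℝ → EuclideanSpace ℝ (Fin N) := fun t => x + t • w with hγ
  have hγd : ∀ t : ℝ, HasDerivAt γ w t := by
    intro t
    have := ((hasDerivAt_id t).smul_const w).const_add x
    simp only [id, one_smul] at this
    exact this
  have hγ0 : γ 0 = x := by simp [hγ]
  have hγc : Continuous γ := by
    apply continuous_const.add
    exact continuous_id.smul continuous_const
  set h : ℝ → ℝ := fun t => fderiv ℝ v (γ t) w with hh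
  have hhd : HasDerivAt h (((ContinuousLinearMap.apply ℝ ℝ w).comp
      (fderiv ℝ (fderiv ℝ v) x)) w) 0 := by
    have hΦ' : HasFDerivAt (fun y => fderiv ℝ v y w)
        ((ContinuousLinearMap.apply ℝ ℝ w).comp (fderiv ℝ (fderiv ℝ v) x)) (γ 0) := by
      rw [hγ0]; exact hΦ
    exact hΦ'.comp_hasDerivAt 0 (hγd 0)
  set g : ℝ → ℝ := fun t => v (γ t) with hg
  have hgd : ∀ᶠ t in nhds (0:ℝ), HasDerivAt g (h t) t := by
    have hpull : ∀ᶠ t in nhds (0:ℝ), DifferentiableAt ℝ v (γ t) := by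
      apply (hγc.tendsto 0).eventually
      rw [hγ0]
      exact hd
    filter_upwards [hpull] with t ht
    exact ht.hasFDerivAt.comp_hasDerivAt t (hγd t)
  have hgmin : IsLocalMin g 0 := by
    have h1 : Tendsto γ (nhds 0) (nhds x) := by rw [← hγ0]; exact hγc.tendsto 0
    have h2 := h1.eventually (hmin : ∀ᶠ y in nhds x, v x ≤ v y)
    simpa [IsLocalMin, IsMinFilter, hg, hγ0] using h2
  exact second_deriv_nonneg_of_isLocalMin hgd hhd hgmin

lemma main_bound {N : ℕ} (hN : 1 ≤ N) (Ω : Set (EuclideanSpace ℝ (Fin N)))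
    (hΩb : Bornology.IsBounded Ω) (hΩo : IsOpen Ω)
    (μ : ℝ) (hμ : 0 < μ) (f : ℝ → ℝ) (θ : ℝ) (hf : Bistable f θ)
    (hF1 : Fprim f 1 = 0)
    (u : EuclideanSpace ℝ (Fin N) → ℝ)
    (hu : IsClassicalSolution Ω μ f (fun _ => 1) u)
    (hu01 : ∀ x ∈ Ω, 0 ≤ u x ∧ u x ≤ 1)
    (hne : Ω.Nonempty)
    {c : ℝ} (hcθ : θ < c) (hc1 : c < 1) :
    ∀ x ∈ closure Ω, c ≤ u x := by
  obtain ⟨hθ01, hfC1, hf0, hfθ, hf1, hd0, hdθ, hd1, hfneg, hfpos⟩ := hf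
  obtain ⟨hucont, hud, hud2, hpde, hubd⟩ := hu
  obtain ⟨hθ0, hθ1⟩ := hθ01
  have hfc : Continuous f := hfC1.continuous
  have hfdiff : Differentiable ℝ f := hfC1.differentiable (by norm_num)
  have hc0 : 0 < c := lt_trans hθ0 hcθ
  -- the primitive and its derivative
  set F : ℝ → ℝ := Fprim f with hFdef
  have hFd : ∀ s : ℝ, HasDerivAt F (f s) s := by
    intro s
    exact intervalIntegral.integral_hasDerivAt_right (hfc.intervalIntegrable _ _)
      (hfc.stronglyMeasurable.stronglyMeasurableAtFilter) hfc.continuousAt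
  have hFcont : Continuous F := by
    have : Differentiable ℝ F := fun s => (hFd s).differentiableAt
    exact this.continuous
  have hfint : ∀ a b : ℝ, IntervalIntegrable f volume a b := fun a b => hfc.intervalIntegrable a b
  have hFsplit : ∀ s : ℝ, F s + ∫ t in s..1, f t = 0 := by
    intro s
    rw [← hF1]
    exact intervalIntegral.integral_add_adjacent_intervals (hfint 0 s) (hfint s 1)
  -- sign facts for f
  have hf_nonpos : ∀ t ∈ Icc (0:ℝ) θ, f t ≤ 0 := by
    intro t ⟨h0, h1⟩
    rcases eq_or_lt_of_le h0 with h | h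
    · rw [← h, hf0]
    rcases eq_or_lt_of_le h1 with h' | h'
    · rw [h', hfθ]
    exact (hfneg t ⟨h, h'⟩).le
  have hf_nonneg : ∀ t ∈ Icc θ 1, 0 ≤ f t := by
    intro t ⟨h0, h1⟩
    rcases eq_or_lt_of_le h0 with h | h
    · rw [← h, hfθ]
    rcases eq_or_lt_of_le h1 with h' | h'
    · rw [h', hf1]
    exact (hfpos t ⟨h, h'⟩).le
  -- F ≤ 0 on [0,1]
  have hFnp : ∀ s ∈ Icc (0:ℝ) 1, F s ≤ 0 := by
    intro s ⟨hs0, hs1⟩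
    rcases le_total s θ with hsθ | hθs
    · have h1 : 0 ≤ ∫ t in (0:ℝ)..s, -f t := by
        apply intervalIntegral.integral_nonneg hs0
        intro t ht
        simp only [neg_nonneg]
        exact hf_nonpos t ⟨ht.1, le_trans ht.2 hsθ⟩
      rw [intervalIntegral.integral_neg] at h1
      have : F s = ∫ t in (0:ℝ)..s, f t := rfl
      linarith
    · have h1 : 0 ≤ ∫ t in s..1, f t := by
        apply intervalIntegral.integral_nonneg hs1
        intro t ht
        exact hf_nonneg t ⟨le_trans hθs ht.1, ht.2⟩
      linarith [hFsplit s]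
  -- Lipschitz-type bound near 1
  obtain ⟨C, hC⟩ := (isCompact_Icc (a := (0:ℝ)) (b := 1)).exists_bound_of_continuousOn
    (hfC1.continuous_deriv le_rfl).continuousOn
  set L : ℝ := max C 0 + 1 with hLdef
  have hL : 0 < L := by positivity
  have hCL : C ≤ L := by rw [hLdef]; linarith [le_max_left C 0]
  have hLf : ∀ τ ∈ Icc (0:ℝ) 1, |f τ| ≤ L * (1 - τ) := by
    intro τ hτ
    have h1 : (1:ℝ) ∈ Icc (0:ℝ) 1 := ⟨zero_le_one, le_refl 1⟩
    have := Convex.norm_image_sub_le_of_norm_deriv_le (f := f) (s := Icc (0:ℝ) 1)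
      (fun x _ => hfdiff.differentiableAt)
      (fun x hx => le_trans (hC x hx) hCL)
      (convex_Icc 0 1) h1 hτ
    rw [hf1, sub_zero] at this
    calc |f τ| = ‖f τ‖ := rfl
    _ ≤ L * ‖τ - 1‖ := this
    _ = L * (1 - τ) := by rw [Real.norm_eq_abs, abs_sub_comm, abs_of_nonneg (by linarith [hτ.2])]
  -- quadratic upper bound for -F
  have hFub : ∀ s ∈ Icc (0:ℝ) 1, -F s ≤ L / 2 * (1 - s) ^ 2 := by
    intro s ⟨hs0, hs1⟩
    have h1 : -F s = ∫ t in s..1, f t := by linarith [hFsplit s]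
    have h2 : (∫ t in s..1, f t) ≤ ∫ t in s..1, L * (1 - t) := by
      apply intervalIntegral.integral_mono_on hs1 (hfint s 1)
      · exact ((continuous_const.mul (continuous_const.sub continuous_id)).intervalIntegrable s 1)
      · intro t ht
        exact le_trans (le_abs_self _) (hLf t ⟨le_trans hs0 ht.1, ht.2⟩)
    have h3 : (∫ t in s..1, L * (1 - t)) = L / 2 * (1 - s) ^ 2 := by
      rw [intervalIntegral.integral_const_mul]
      have : (∫ t in s..1, (1 - t)) = ∫ t in s..1, ((1:ℝ) - t) := rfl
      rw [intervalIntegral.integral_sub intervalIntegrable_const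
        (intervalIntegral.intervalIntegrable_id)]
      rw [intervalIntegral.integral_const, integral_id]
      simp
      ring
    linarith
  -- neighbourhoods where f has a sign outside [0,1]
  obtain ⟨δ₀, hδ₀pos, hδ₀left, _⟩ := sign_near_of_deriv_neg (hfdiff 0).hasDerivAt hd0 hf0
  obtain ⟨δ₁, hδ₁pos, _, hδ₁right⟩ := sign_near_of_deriv_neg (hfdiff 1).hasDerivAt hd1 hf1
  -- radius of the domain
  obtain ⟨R₀, hR₀⟩ := (hΩb.closure).subset_closedBall 0
  set R : ℝ := max R₀ 0 with hRdef
  have hR0 : 0 ≤ R := le_max_right _ _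
  have hRx : ∀ x ∈ closure Ω, ‖x‖ ≤ R := by
    intro x hx
    have := hR₀ hx
    rw [Metric.mem_closedBall, dist_zero_right] at this
    exact le_trans this (le_max_left _ _)
  -- parameters
  set m : ℝ := Real.sqrt (μ / L) with hmdef
  have hm : 0 < m := Real.sqrt_pos.2 (div_pos hμ hL)
  set k : ℝ := Real.exp (2 * R / m) / (1 - c) with hkdef
  have hk : 0 < k := div_pos (Real.exp_pos _) (by linarith)
  set c₀ : ℝ := L / (4 * k ^ 2) with hc₀def
  have hc₀ : 0 < c₀ := by positivity
  have hkc : k * (1 - c) = Real.exp (2 * R / m) := by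
    rw [hkdef]; exact div_mul_cancel₀ _ (by linarith : (1:ℝ) - c ≠ 0)
  have hmsq : m ^ 2 = μ / L := Real.sq_sqrt (div_pos hμ hL).le
  have hsum : c₀ + c₀ = L / (2 * k ^ 2) := by
    rw [hc₀def]; field_simp; ring
  clear_value m k c₀
  set W : ℝ → ℝ := fun s => c₀ + c₀ * s - F s with hWdef
  set ρ : ℝ := min (min δ₀ δ₁) (1/2) with hρdef
  have hρpos : 0 < ρ := by
    apply lt_min (lt_min hδ₀pos hδ₁pos); norm_num
  have hρhalf : ρ ≤ 1/2 := min_le_right _ _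
  have hρδ₀ : ρ ≤ δ₀ := le_trans (min_le_left _ _) (min_le_left _ _)
  have hρδ₁ : ρ ≤ δ₁ := le_trans (min_le_left _ _) (min_le_right _ _)
  set I : Set ℝ := Ioo (-ρ) (1 + ρ) with hIdef
  have hIcc : Icc (0:ℝ) 1 ⊆ I := fun s hs => ⟨by linarith [hs.1], by linarith [hs.2]⟩
  have hWpos : ∀ s ∈ I, 0 < W s := by
    rintro s ⟨hs1, hs2⟩
    rcases le_total s 0 with hs0 | hs0
    · have hF : F s ≤ 0 := by
        have h1 : 0 ≤ ∫ t in s..0, f t := by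
          apply intervalIntegral.integral_nonneg hs0
          intro t ht
          rcases eq_or_lt_of_le ht.2 with h | h
          · rw [h, hf0]
          · exact (hδ₀left t (by linarith [ht.1]) h).le
        have h2 : F s = -∫ t in s..0, f t := by
          rw [← intervalIntegral.integral_symm]; rfl
        linarith
      have : -(1:ℝ)/2 ≤ s := by linarith
      have hWs : W s = c₀ + c₀ * s - F s := rfl
      nlinarith
    · rcases le_total s 1 with hs1' | hs1'
      · have hF : F s ≤ 0 := hFnp s ⟨hs0, hs1'⟩
        have hWs : W s = c₀ + c₀ * s - F s := rfl
        nlinarith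
      · have hF : F s ≤ 0 := by
          have h1 : (∫ t in (1:ℝ)..s, f t) ≤ 0 := by
            have h2 : 0 ≤ ∫ t in (1:ℝ)..s, -f t := by
              apply intervalIntegral.integral_nonneg hs1'
              intro t ht
              simp only [neg_nonneg]
              rcases eq_or_lt_of_le ht.1 with h | h
              · rw [← h, hf1]
              · exact (hδ₁right t h (by linarith [ht.2])).le
            rw [intervalIntegral.integral_neg] at h2
            linarith
          have h3 : F 1 + ∫ t in (1:ℝ)..s, f t = F s :=
            intervalIntegral.integral_add_adjacent_intervals (hfint 0 1) (hfint 1 s)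
          have h4 : F 1 = 0 := hF1
          linarith
        have hWs : W s = c₀ + c₀ * s - F s := rfl
        nlinarith
  have hWcont : Continuous W := by
    apply Continuous.sub
    · exact continuous_const.add (continuous_const.mul continuous_id)
    · exact hFcont
  set r : ℝ → ℝ := fun s => Real.sqrt (μ / (2 * W s)) with hrdef
  have hrpos : ∀ s ∈ I, 0 < r s := by
    intro s hs
    exact Real.sqrt_pos.2 (div_pos hμ (by linarith [hWpos s hs]))
  have hrca : ∀ s ∈ I, ContinuousAt r s := by
    intro s hs
    apply Real.continuous_sqrt.continuousAt.comp
    exact (continuousAt_const.div ((continuous_const.mul hWcont).continuousAt)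
      (mul_ne_zero two_ne_zero (hWpos s hs).ne'))
  have hIopen : IsOpen I := isOpen_Ioo
  have h0I : (0:ℝ) ∈ I := hIcc ⟨le_refl 0, zero_le_one⟩
  have hIoc : Set.OrdConnected I := Set.ordConnected_Ioo
  have hrcI : ContinuousOn r I := fun s hs => (hrca s hs).continuousWithinAt
  have hrint : ∀ s ∈ I, ∀ s' ∈ I, IntervalIntegrable r volume s s' := by
    intro s hs s' hs'
    exact (hrcI.mono (hIoc.uIcc_subset hs hs')).intervalIntegrable
  set Z : ℝ → ℝ := fun y => ∫ t in (0:ℝ)..y, r t with hZdef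
  have hZd : ∀ s ∈ I, HasDerivAt Z (r s) s := by
    intro s hs
    exact intervalIntegral.integral_hasDerivAt_right (hrint 0 h0I s hs)
      (hrcI.stronglyMeasurableAtFilter hIopen s hs) (hrca s hs)
  -- the lingering estimate:  2 R ≤ Z 1 - Z c
  have hcI : c ∈ I := hIcc ⟨hc0.le, hc1.le⟩
  have h1I : (1:ℝ) ∈ I := hIcc ⟨zero_le_one, le_refl 1⟩
  have hZsplit : Z c + ∫ t in c..1, r t = Z 1 :=
    intervalIntegral.integral_add_adjacent_intervals (hrint 0 h0I c hcI) (hrint c hcI 1 h1I)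
  set g : ℝ → ℝ := fun σ => m * k * (Real.sqrt (1 + (k * (1 - σ)) ^ 2))⁻¹ with hgdef
  have hSpos : ∀ σ : ℝ, 0 < Real.sqrt (1 + (k * (1 - σ)) ^ 2) := by
    intro σ; apply Real.sqrt_pos.2; positivity
  have hgcont : Continuous g := by
    apply continuous_const.mul
    apply Continuous.inv₀
    · apply Real.continuous_sqrt.comp
      exact continuous_const.add (((continuous_const.mul
        (continuous_const.sub continuous_id))).pow 2)
    · intro σ; exact (hSpos σ).ne'
  have hBd : ∀ σ : ℝ, HasDerivAt (fun σ => -m * Real.arsinh (k * (1 - σ))) (g σ) σ := by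
    intro σ
    have h1 : HasDerivAt (fun σ : ℝ => k * (1 - σ)) (k * (0 - 1)) σ :=
      ((hasDerivAt_const σ (1:ℝ)).sub (hasDerivAt_id σ)).const_mul k
    have h2 := (Real.hasDerivAt_arsinh (k * (1 - σ))).comp σ h1
    have h3 := h2.const_mul (-m)
    refine h3.congr_deriv ?_
    rw [hgdef]
    field_simp
    norm_num
  have hgler : ∀ σ ∈ Icc c 1, g σ ≤ r σ := by
    intro σ ⟨hσc, hσ1⟩
    have hσ01 : σ ∈ Icc (0:ℝ) 1 := ⟨by linarith, hσ1⟩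
    have hWσ : W σ ≤ L / (2 * k ^ 2) + L / 2 * (1 - σ) ^ 2 := by
      have h1 := hFub σ hσ01
      have h2 : W σ = c₀ + c₀ * σ - F σ := rfl
      have h3 : c₀ * σ ≤ c₀ := by nlinarith
      have h4 : c₀ + c₀ ≤ L / (2 * k ^ 2) := le_of_eq hsum
      nlinarith
    have hWσpos : 0 < W σ := hWpos σ (hIcc hσ01)
    set S := Real.sqrt (1 + (k * (1 - σ)) ^ 2) with hSdef
    have hS := hSpos σ
    have hSsq : S ^ 2 = 1 + (k * (1 - σ)) ^ 2 := Real.sq_sqrt (by positivity)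
    rw [hgdef, hrdef]
    simp only
    rw [← hSdef]
    have hmk : 0 ≤ m * k * S⁻¹ := by positivity
    rw [Real.le_sqrt hmk (by positivity)]
    have hWk : 2 * (W σ) * k ^ 2 ≤ L * (1 + (k * (1 - σ)) ^ 2) := by
      have h7 : (W σ) * (2 * k ^ 2) ≤ (L / (2 * k ^ 2) + L / 2 * (1 - σ) ^ 2) * (2 * k ^ 2) :=
        mul_le_mul_of_nonneg_right hWσ (by positivity)
      calc 2 * (W σ) * k ^ 2 = W σ * (2 * k ^ 2) := by ring
      _ ≤ (L / (2 * k ^ 2) + L / 2 * (1 - σ) ^ 2) * (2 * k ^ 2) := h7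
      _ = L + L * k ^ 2 * (1 - σ) ^ 2 := by field_simp
      _ = L * (1 + (k * (1 - σ)) ^ 2) := by ring
    have h8 : (m * k * S⁻¹) ^ 2 = μ * k ^ 2 / (L * S ^ 2) := by
      rw [mul_pow, mul_pow, inv_pow, hmsq]
      field_simp
    rw [h8, div_le_div_iff₀ (by positivity) (by positivity), hSsq]
    calc μ * k ^ 2 * (2 * W σ) = μ * (2 * (W σ) * k ^ 2) := by ring
    _ ≤ μ * (L * (1 + (k * (1 - σ)) ^ 2)) := mul_le_mul_of_nonneg_left hWk hμ.le
  have hgint : IntervalIntegrable g volume c 1 := hgcont.intervalIntegrable c 1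
  have hrint_c1 : IntervalIntegrable r volume c 1 := hrint c hcI 1 h1I
  have hint_mono : (∫ σ in c..1, g σ) ≤ ∫ σ in c..1, r σ :=
    intervalIntegral.integral_mono_on hc1.le hgint hrint_c1 hgler
  have hFTC : (∫ σ in c..1, g σ) = m * Real.arsinh (k * (1 - c)) := by
    rw [intervalIntegral.integral_eq_sub_of_hasDerivAt (fun σ _ => hBd σ) hgint]
    norm_num [Real.arsinh_zero]
  have harsinh : 2 * R ≤ m * Real.arsinh (k * (1 - c)) := by
    have h1 : Real.exp (2 * R / m) ≤ Real.exp (Real.arsinh (k * (1 - c))) := by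
      rw [Real.exp_arsinh, hkc]
      linarith [Real.sqrt_nonneg (1 + Real.exp (2 * R / m) ^ 2)]
    have h2 : 2 * R / m ≤ Real.arsinh (k * (1 - c)) := Real.exp_le_exp.1 h1
    calc 2 * R = m * (2 * R / m) := by field_simp
    _ ≤ m * Real.arsinh (k * (1 - c)) := mul_le_mul_of_nonneg_left h2 hm.le
  have hZ1c : 2 * R ≤ Z 1 - Z c := by
    have h1 : Z 1 - Z c = ∫ t in c..1, r t := by linarith [hZsplit]
    rw [h1]
    calc 2 * R ≤ m * Real.arsinh (k * (1 - c)) := harsinh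
    _ = ∫ σ in c..1, g σ := hFTC.symm
    _ ≤ ∫ t in c..1, r t := hint_mono
  -- the comparison function V and its minimum
  set i₀ : Fin N := ⟨0, hN⟩ with hi₀def
  set ℓ : EuclideanSpace ℝ (Fin N) →L[ℝ] ℝ := EuclideanSpace.proj i₀ with hℓdef
  have hℓbound : ∀ y ∈ closure Ω, |ℓ y| ≤ R := by
    intro y hy
    have h1 : ℓ y = inner ℝ (EuclideanSpace.single i₀ (1:ℝ)) y := by
      rw [EuclideanSpace.inner_single_left]
      simp [hℓdef]
    rw [h1]
    calc |inner ℝ (EuclideanSpace.single i₀ (1:ℝ)) y|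
        ≤ ‖EuclideanSpace.single i₀ (1:ℝ)‖ * ‖y‖ := abs_real_inner_le_norm _ _
    _ = ‖y‖ := by rw [EuclideanSpace.norm_single]; simp
    _ ≤ R := hRx y hy
  set V : EuclideanSpace ℝ (Fin N) → ℝ := fun y => Z (u y) - ℓ y with hVdef
  have humem : ∀ y ∈ closure Ω, u y ∈ Icc (0:ℝ) 1 := by
    intro y hy
    by_cases hyΩ : y ∈ Ω
    · exact ⟨(hu01 y hyΩ).1, (hu01 y hyΩ).2⟩
    · have hyfr : y ∈ frontier Ω := by rw [hΩo.frontier_eq]; exact ⟨hy, hyΩ⟩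
      rw [hubd y hyfr]; exact ⟨zero_le_one, le_refl 1⟩
  have hZcontIcc : ContinuousOn Z (Icc (0:ℝ) 1) :=
    fun s hs => ((hZd s (hIcc hs)).continuousAt).continuousWithinAt
  have hVcont : ContinuousOn V (closure Ω) :=
    (hZcontIcc.comp hucont humem).sub (ℓ.continuous.continuousOn)
  have hK : IsCompact (closure Ω) := hΩb.isCompact_closure
  obtain ⟨xm, hxmmem, hxmmin⟩ := hK.exists_isMinOn hne.closure hVcont
  -- an interior minimum is impossible
  have hnotint : xm ∉ Ω := by
    intro hxmΩ
    have hxmem01 : u xm ∈ Icc (0:ℝ) 1 := ⟨(hu01 xm hxmΩ).1, (hu01 xm hxmΩ).2⟩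
    have hsmI : u xm ∈ I := hIcc hxmem01
    have hwm : 0 < W (u xm) := hWpos _ hsmI
    have hrm : 0 < r (u xm) := hrpos _ hsmI
    have hrmsq : (r (u xm)) ^ 2 = μ / (2 * W (u xm)) := Real.sq_sqrt (by positivity)
    -- derivatives of W and r at u xm
    have hWd : HasDerivAt W (c₀ - f (u xm)) (u xm) := by
      have h1 : HasDerivAt (fun s : ℝ => c₀ + c₀ * s) c₀ (u xm) := by
        simpa using ((hasDerivAt_id (u xm)).const_mul c₀).const_add c₀
      exact h1.sub (hFd (u xm))
    have hinner : HasDerivAt (fun s => μ / (2 * W s))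
        (-(μ * (2 * (c₀ - f (u xm)))) / (2 * W (u xm)) ^ 2) (u xm) := by
      have h2 : HasDerivAt (fun s : ℝ => 2 * W s) (2 * (c₀ - f (u xm))) (u xm) := hWd.const_mul 2
      exact ((hasDerivAt_const (u xm) μ).div h2 (by positivity)).congr_deriv (by ring)
    set rd : ℝ := (-(μ * (2 * (c₀ - f (u xm)))) / (2 * W (u xm)) ^ 2)
        / (2 * Real.sqrt (μ / (2 * W (u xm)))) with hrddef
    have hrd : HasDerivAt r rd (u xm) := hinner.sqrt (by positivity)
    -- V is differentiable on Ω with explicit derivative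
    have hVd : ∀ y ∈ Ω, HasFDerivAt V ((r (u y)) • fderiv ℝ u y - ℓ) y := by
      intro y hy
      have h1 : HasDerivAt Z (r (u y)) (u y) :=
        hZd (u y) (hIcc ⟨(hu01 y hy).1, (hu01 y hy).2⟩)
      have h3 := h1.comp_hasFDerivAt y (hud y hy).hasFDerivAt
      exact h3.sub ℓ.hasFDerivAt
    have hVmin : IsLocalMin V xm :=
      hxmmin.isLocalMin (Filter.mem_of_superset (hΩo.mem_nhds hxmΩ) subset_closure)
    have hfirst : fderiv ℝ V xm = 0 := hVmin.fderiv_eq_zero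
    have hVfd : fderiv ℝ V xm = (r (u xm)) • fderiv ℝ u xm - ℓ := (hVd xm hxmΩ).fderiv
    have hAi : ∀ i : Fin N,
        (r (u xm)) * fderiv ℝ u xm (EuclideanSpace.single i 1) = ℓ (EuclideanSpace.single i 1) := by
      intro i
      have h0 : (r (u xm)) • fderiv ℝ u xm - ℓ = 0 := by rw [← hVfd]; exact hfirst
      have h1 := congrArg
        (fun T : EuclideanSpace ℝ (Fin N) →L[ℝ] ℝ => T (EuclideanSpace.single i 1)) h0
      simp only [ContinuousLinearMap.sub_apply, ContinuousLinearMap.smul_apply,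
        ContinuousLinearMap.zero_apply, smul_eq_mul] at h1
      linarith
    have hruF : HasFDerivAt (fun y => r (u y)) (rd • fderiv ℝ u xm) xm :=
      hrd.comp_hasFDerivAt xm (hud xm hxmΩ).hasFDerivAt
    have hVev : (fun y => fderiv ℝ V y) =ᶠ[nhds xm]
        (fun y => (r (u y)) • fderiv ℝ u y - ℓ) := by
      filter_upwards [hΩo.mem_nhds hxmΩ] with y hy
      exact (hVd y hy).fderiv
    have hdV2 : DifferentiableAt ℝ (fderiv ℝ V) xm := by
      rw [hVev.differentiableAt_iff]
      exact (hruF.differentiableAt.smul (hud2 xm hxmΩ)).sub (differentiableAt_const _)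
    have hdV : ∀ᶠ y in nhds xm, DifferentiableAt ℝ V y := by
      filter_upwards [hΩo.mem_nhds hxmΩ] with y hy
      exact (hVd y hy).differentiableAt
    have hlapV : 0 ≤ lap V xm := lap_nonneg_of_isLocalMin hdV hdV2 hVmin
    -- compute the Laplacian of V at xm
    have hsummand : ∀ i : Fin N,
        fderiv ℝ (fun y => fderiv ℝ V y (EuclideanSpace.single i 1)) xm (EuclideanSpace.single i 1)
        = rd * (fderiv ℝ u xm (EuclideanSpace.single i 1)) ^ 2
          + (r (u xm)) * fderiv ℝ (fun y => fderiv ℝ u y (EuclideanSpace.single i 1)) xm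
              (EuclideanSpace.single i 1) := by
      intro i
      have hB := hasFDerivAt_fderiv_apply (hud2 xm hxmΩ) (EuclideanSpace.single i 1)
      have hΨ := (hruF.mul hB).sub_const (ℓ (EuclideanSpace.single i 1))
      have hev2 : (fun y => fderiv ℝ V y (EuclideanSpace.single i 1)) =ᶠ[nhds xm]
          (fun y => r (u y) * fderiv ℝ u y (EuclideanSpace.single i 1)
            - ℓ (EuclideanSpace.single i 1)) := by
        filter_upwards [hΩo.mem_nhds hxmΩ] with y hy
        rw [(hVd y hy).fderiv]
        simp [ContinuousLinearMap.sub_apply, ContinuousLinearMap.smul_apply, smul_eq_mul]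
      rw [hev2.fderiv_eq, HasFDerivAt.fderiv (f := fun y => r (u y) * fderiv ℝ u y (EuclideanSpace.single i 1)
        - ℓ (EuclideanSpace.single i 1)) hΨ, ← hB.fderiv]
      simp only [ContinuousLinearMap.add_apply, ContinuousLinearMap.smul_apply, smul_eq_mul]
      ring
    have hlapVeq : lap V xm
        = rd * (∑ i : Fin N, (fderiv ℝ u xm (EuclideanSpace.single i 1)) ^ 2)
          + (r (u xm)) * lap u xm := by
      simp only [lap]
      rw [Finset.sum_congr rfl (fun i _ => hsummand i), Finset.sum_add_distrib,
        ← Finset.mul_sum, ← Finset.mul_sum]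
    have hsumsq : (∑ i : Fin N, (fderiv ℝ u xm (EuclideanSpace.single i 1)) ^ 2)
        = 1 / (r (u xm)) ^ 2 := by
      have hterm : ∀ i : Fin N, (fderiv ℝ u xm (EuclideanSpace.single i 1)) ^ 2
          = (if i = i₀ then (1:ℝ) else 0) / (r (u xm)) ^ 2 := by
        intro i
        have h1 := hAi i
        have h2 : ℓ (EuclideanSpace.single i 1) = if i = i₀ then (1:ℝ) else 0 := by
          rw [hℓdef]
          by_cases h : i = i₀ <;>
            simp [PiLp.proj_apply, EuclideanSpace.single_apply, h, Ne.symm]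
        rw [h2] at h1
        have h3 : fderiv ℝ u xm (EuclideanSpace.single i 1)
            = (if i = i₀ then (1:ℝ) else 0) / (r (u xm)) := by
          field_simp
          linarith
        rw [h3, div_pow]
        congr 1
        by_cases h : i = i₀ <;> simp [h]
      rw [Finset.sum_congr rfl (fun i _ => hterm i), ← Finset.sum_div]
      simp
    have hlapu : lap u xm = -(f (u xm)) / μ := by
      have h := hpde xm hxmΩ
      rw [eq_div_iff hμ.ne']
      linarith
    rw [hlapVeq, hsumsq, hlapu] at hlapV
    -- algebraic contradiction
    have hμeq : μ = 2 * W (u xm) * (r (u xm)) ^ 2 := by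
      rw [hrmsq]; field_simp
    have hEeq : rd * (1 / (r (u xm)) ^ 2) + (r (u xm)) * (-(f (u xm)) / μ)
        = -c₀ / (2 * W (u xm) * r (u xm)) := by
      have hrr : Real.sqrt (μ / (2 * W (u xm))) = r (u xm) := rfl
      rw [hrddef, hrr, hμeq]
      field_simp
      ring
    rw [hEeq] at hlapV
    have : -c₀ / (2 * W (u xm) * r (u xm)) < 0 :=
      div_neg_of_neg_of_pos (by linarith) (by positivity)
    linarith
  have hxmfr : xm ∈ frontier Ω := by rw [hΩo.frontier_eq]; exact ⟨hxmmem, hnotint⟩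
  have huxm : u xm = 1 := hubd xm hxmfr
  intro x hx
  by_contra hlt
  push_neg at hlt
  have hux01 := humem x hx
  have hZineq : Z c ≤ Z (u x) := by
    have h1 : V xm ≤ V x := hxmmin hx
    have h2 : Z (u x) - ℓ x ≥ Z 1 - ℓ xm := by
      have e2 : V xm = Z 1 - ℓ xm := by rw [hVdef]; simp only []; rw [huxm]
      have e3 : V x = Z (u x) - ℓ x := rfl
      linarith [e2 ▸ e3 ▸ h1]
    have h4 := abs_le.1 (hℓbound xm hxmmem)
    have h5 := abs_le.1 (hℓbound x hx)
    linarith [hZ1c]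
  have hpos2 : 0 < ∫ t in (u x)..c, r t := by
    apply intervalIntegral.intervalIntegral_pos_of_pos_on
      (hrint (u x) (hIcc hux01) c hcI) _ hlt
    intro t ht
    exact hrpos t (hIcc ⟨le_trans hux01.1 ht.1.le, le_trans ht.2.le hc1.le⟩)
  have hadj : Z (u x) + ∫ t in (u x)..c, r t = Z c :=
    intervalIntegral.integral_add_adjacent_intervals (hrint 0 h0I (u x) (hIcc hux01))
      (hrint (u x) (hIcc hux01) c hcI)
  linarith

/-- For bistable `f` with `F(1) = 0`, the unique classical solution of
`-μΔu = f(u)` in `Ω` with boundary value `1` and values in `[0,1]` is `u ≡ 1`. -/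
theorem stmt10 {N : ℕ} (hN : 1 ≤ N) (Ω : Set (EuclideanSpace ℝ (Fin N)))
    (hΩb : Bornology.IsBounded Ω) (hΩo : IsOpen Ω) (hΩC2 : HasC2Boundary Ω)
    (μ : ℝ) (hμ : 0 < μ) (f : ℝ → ℝ) (θ : ℝ) (hf : Bistable f θ)
    (hF1 : Fprim f 1 = 0)
    (u : EuclideanSpace ℝ (Fin N) → ℝ)
    (hu : IsClassicalSolution Ω μ f (fun _ => 1) u)
    (hu01 : ∀ x ∈ Ω, 0 ≤ u x ∧ u x ≤ 1) :
    ∀ x ∈ closure Ω, u x = 1 := by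
  by_cases hne : Ω.Nonempty
  · intro x hx
    have hθ1 : θ < 1 := hf.1.2
    have hle : u x ≤ 1 := by
      by_cases hxΩ : x ∈ Ω
      · exact (hu01 x hxΩ).2
      · have hfr : x ∈ frontier Ω := by rw [hΩo.frontier_eq]; exact ⟨hx, hxΩ⟩
        exact le_of_eq (hu.2.2.2.2 x hfr)
    have hge : 1 ≤ u x := by
      by_contra h
      push_neg at h
      set c : ℝ := (max θ (u x) + 1) / 2 with hcdef
      have hmax1 : max θ (u x) < 1 := max_lt hθ1 h
      have h1 : θ < c := by
        have := le_max_left θ (u x)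
        rw [hcdef]; linarith
      have h2 : c < 1 := by rw [hcdef]; linarith
      have h3 : u x < c := by
        have := le_max_right θ (u x)
        rw [hcdef]; linarith
      have := main_bound hN Ω hΩb hΩo μ hμ f θ hf hF1 u hu hu01 hne h1 h2 x hx
      linarith
    linarith
  · intro x hx
    rw [Set.not_nonempty_iff_eq_empty] at hne
    rw [hne, closure_empty] at hx
    exact absurd hx (Set.notMem_empty x)
end
end

section
/- Let f : ℝ → ℝ be Lipschitz continuous with Lipschitz constant L, let N ≥ 1 be an integer, let a ∈ ℝ, and let R_m > 0 satisfy L·R_m²/(2N) < 1. Then there exists a unique continuous function u : [0,R_m] → ℝ such that for all r ∈ [0,R_m], u(r) = a - ∫₀^r s^{1-N}·(∫₀^s σ^{N-1}·f(u(σ)) dσ) ds. -/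
open Set MeasureTheory Real

noncomputable section

namespace Stmt11Aux

open Filter

/-- Inner integral. -/
def P (N : ℕ) (φ : ℝ → ℝ) (s : ℝ) : ℝ := ∫ σ in (0:ℝ)..s, σ ^ (N - 1) * φ σ

/-- Outer integrand. -/
def Q (N : ℕ) (φ : ℝ → ℝ) (s : ℝ) : ℝ := s ^ (1 - (N:ℤ)) * P N φ s

lemma contP {N : ℕ} (φ : ℝ → ℝ) (hφ : Continuous φ) : Continuous (P N φ) :=
  intervalIntegral.continuous_primitive
    (fun a b => ((continuous_pow _).mul hφ).intervalIntegrable a b) 0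

lemma P_bound {N : ℕ} (hN : 1 ≤ N) (φ : ℝ → ℝ) (hφ : Continuous φ) {C s : ℝ}
    (hs : 0 ≤ s) (hC : ∀ σ ∈ Icc (0:ℝ) s, |φ σ| ≤ C) :
    |P N φ s| ≤ C * s ^ N / N := by
  have h1 : |P N φ s| ≤ ∫ σ in (0:ℝ)..s, |σ ^ (N-1) * φ σ| :=
    intervalIntegral.abs_integral_le_integral_abs hs
  have h2 : (∫ σ in (0:ℝ)..s, |σ ^ (N-1) * φ σ|) ≤ ∫ σ in (0:ℝ)..s, σ ^ (N-1) * C := by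
    apply intervalIntegral.integral_mono_on hs
    · exact (((continuous_pow _).mul hφ).abs).intervalIntegrable _ _
    · exact ((continuous_pow _).mul continuous_const).intervalIntegrable _ _
    · intro σ hσ
      rw [abs_mul, abs_pow, abs_of_nonneg hσ.1]
      exact mul_le_mul_of_nonneg_left (hC σ hσ) (pow_nonneg hσ.1 _)
  have h3 : (∫ σ in (0:ℝ)..s, σ ^ (N-1) * C) = C * s ^ N / N := by
    rw [intervalIntegral.integral_mul_const, integral_pow]
    have hN1 : N - 1 + 1 = N := Nat.succ_pred_eq_of_pos hN
    rw [hN1, zero_pow (by omega : N ≠ 0)]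
    have hc : ((N - 1 : ℕ) : ℝ) + 1 = (N : ℝ) := by
      push_cast [Nat.cast_sub hN]
      ring
    rw [hc]
    ring
  linarith [h1.trans h2]

lemma Q_zero {N : ℕ} (φ : ℝ → ℝ) : Q N φ 0 = 0 := by
  simp [Q, P]

lemma Q_bound {N : ℕ} (hN : 1 ≤ N) (φ : ℝ → ℝ) (hφ : Continuous φ) {C s : ℝ}
    (hs : 0 ≤ s) (hC : ∀ σ ∈ Icc (0:ℝ) s, |φ σ| ≤ C) :
    |Q N φ s| ≤ C / N * s := by
  have hC0 : 0 ≤ C := le_trans (abs_nonneg _) (hC 0 ⟨le_rfl, hs⟩)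
  have hNpos : (0:ℝ) < N := by exact_mod_cast hN
  rcases eq_or_lt_of_le hs with h | h
  · rw [← h, Q_zero]
    simp
  · have hb := P_bound hN φ hφ hs hC
    have hzp : (0:ℝ) < s ^ (1 - (N:ℤ)) := zpow_pos h _
    have hss : s ^ (1 - (N:ℤ)) * s ^ N = s := by
      rw [← zpow_natCast s N, ← zpow_add₀ h.ne']
      norm_num
    rw [Q, abs_mul, abs_of_pos hzp]
    calc s ^ (1 - (N:ℤ)) * |P N φ s| ≤ s ^ (1 - (N:ℤ)) * (C * s ^ N / N) :=
          mul_le_mul_of_nonneg_left hb hzp.le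
      _ = C / N * (s ^ (1 - (N:ℤ)) * s ^ N) := by ring
      _ = C / N * s := by rw [hss]

lemma Q_contOn {N : ℕ} (hN : 1 ≤ N) (φ : ℝ → ℝ) (hφ : Continuous φ) :
    ContinuousOn (Q N φ) (Ici 0) := by
  intro s hs
  rcases eq_or_lt_of_le (mem_Ici.mp hs) with h | h
  · subst h
    obtain ⟨C, hC⟩ :=
      (isCompact_Icc : IsCompact (Icc (0:ℝ) 1)).exists_bound_of_continuousOn hφ.continuousOn
    have hmem : Ico (0:ℝ) 1 ∈ nhdsWithin (0:ℝ) (Ici 0) := by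
      rw [← Ici_inter_Iio]
      exact Filter.inter_mem self_mem_nhdsWithin
        (mem_nhdsWithin_of_mem_nhds (Iio_mem_nhds one_pos))
    have hev : ∀ᶠ t in nhdsWithin (0:ℝ) (Ici 0), ‖Q N φ t‖ ≤ C / N * t := by
      filter_upwards [hmem] with t ht
      have : ∀ σ ∈ Icc (0:ℝ) t, |φ σ| ≤ C := fun σ hσ => by
        simpa [Real.norm_eq_abs] using hC σ ⟨hσ.1, hσ.2.trans ht.2.le⟩
      simpa [Real.norm_eq_abs] using Q_bound hN φ hφ ht.1 this
    have hg : Tendsto (fun t : ℝ => C / N * t) (nhdsWithin (0:ℝ) (Ici 0)) (nhds 0) := by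
      have h := (((continuous_const.mul continuous_id : Continuous fun t : ℝ => C / (N:ℝ) * t)).tendsto (0:ℝ)).mono_left
        (nhdsWithin_le_nhds (s := Ici (0:ℝ)))
      have h' : Tendsto (fun t : ℝ => C / N * t) (nhdsWithin (0:ℝ) (Ici 0)) (nhds (C / N * 0)) := h
      rwa [mul_zero] at h'
    have := squeeze_zero_norm' hev hg
    rw [ContinuousWithinAt, Q_zero]
    exact this
  · apply ContinuousWithinAt.mono _ (subset_univ _)
    rw [continuousWithinAt_univ]
    exact ((continuousAt_zpow₀ s _ (Or.inl h.ne')).mul ((contP φ hφ).continuousAt))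

lemma Q_intInt {N : ℕ} (hN : 1 ≤ N) (φ : ℝ → ℝ) (hφ : Continuous φ) {r : ℝ} (hr : 0 ≤ r) :
    IntervalIntegrable (Q N φ) volume 0 r :=
  ((Q_contOn hN φ hφ).mono (by rw [uIcc_of_le hr]; exact Icc_subset_Ici_self)).intervalIntegrable

/-- The fixed-point operator. -/
def T (f : ℝ → ℝ) (N : ℕ) (a : ℝ) (w : ℝ → ℝ) (r : ℝ) : ℝ :=
  a - ∫ s in (0:ℝ)..r, Q N (fun σ => f (w σ)) s

lemma contT (f : ℝ → ℝ) (N : ℕ) (a : ℝ) (hN : 1 ≤ N) (hfc : Continuous f)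
    (w : ℝ → ℝ) (hw : Continuous w) {Rm : ℝ} (hRm : 0 ≤ Rm) :
    ContinuousOn (T f N a w) (Icc 0 Rm) := by
  have h := intervalIntegral.continuousOn_primitive_interval' (μ := volume)
      (Q_intInt hN (fun σ => f (w σ)) (hfc.comp hw) hRm) (left_mem_uIcc (a := (0:ℝ)) (b := Rm))
  rw [uIcc_of_le hRm] at h
  exact continuousOn_const.sub h

lemma T_dist (f : ℝ → ℝ) {L : NNReal} (hf : LipschitzWith L f) {N : ℕ} (hN : 1 ≤ N)
    (a : ℝ) {Rm : ℝ} (hRm : 0 < Rm) (w₁ w₂ : ℝ → ℝ) (hw₁ : Continuous w₁)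
    (hw₂ : Continuous w₂) {M : ℝ} (hM0 : 0 ≤ M) (hM : ∀ σ, |w₁ σ - w₂ σ| ≤ M)
    {r : ℝ} (hr : r ∈ Icc (0:ℝ) Rm) :
    |T f N a w₁ r - T f N a w₂ r| ≤ ((L:ℝ) * Rm ^ 2 / (2 * N)) * M := by
  have hfc := hf.continuous
  have hNpos : (0:ℝ) < N := by exact_mod_cast hN
  set ψ : ℝ → ℝ := fun σ => f (w₁ σ) - f (w₂ σ) with hψdef
  have hψc : Continuous ψ := (hfc.comp hw₁).sub (hfc.comp hw₂)
  have hψb : ∀ σ, |ψ σ| ≤ (L:ℝ) * M := fun σ => by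
    calc |ψ σ| ≤ (L:ℝ) * |w₁ σ - w₂ σ| := by
          simpa [Real.dist_eq] using hf.dist_le_mul (w₁ σ) (w₂ σ)
      _ ≤ (L:ℝ) * M := mul_le_mul_of_nonneg_left (hM σ) L.coe_nonneg
  have key : T f N a w₁ r - T f N a w₂ r = -∫ s in (0:ℝ)..r, Q N ψ s := by
    have h1 : (∫ s in (0:ℝ)..r, Q N (fun σ => f (w₁ σ)) s) -
        (∫ s in (0:ℝ)..r, Q N (fun σ => f (w₂ σ)) s) = ∫ s in (0:ℝ)..r, Q N ψ s := by
      rw [← intervalIntegral.integral_sub (Q_intInt hN (fun σ => f (w₁ σ)) (hfc.comp hw₁) hr.1)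
        (Q_intInt hN (fun σ => f (w₂ σ)) (hfc.comp hw₂) hr.1)]
      apply intervalIntegral.integral_congr
      intro s _
      simp only [Q, P, hψdef]
      have i1 : IntervalIntegrable (fun σ : ℝ => σ ^ (N - 1) * f (w₁ σ)) volume 0 s :=
        ((continuous_pow _).mul (hfc.comp' hw₁)).intervalIntegrable 0 s
      have i2 : IntervalIntegrable (fun σ : ℝ => σ ^ (N - 1) * f (w₂ σ)) volume 0 s :=
        ((continuous_pow _).mul (hfc.comp' hw₂)).intervalIntegrable 0 s
      rw [← mul_sub, ← intervalIntegral.integral_sub i1 i2]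
      congr 1
      apply intervalIntegral.integral_congr
      intro σ _
      ring
    simp only [T]
    linarith [h1]
  rw [key, abs_neg]
  have h2 : |∫ s in (0:ℝ)..r, Q N ψ s| ≤ ∫ s in (0:ℝ)..r, |Q N ψ s| :=
    intervalIntegral.abs_integral_le_integral_abs hr.1
  have h3 : (∫ s in (0:ℝ)..r, |Q N ψ s|) ≤ ∫ s in (0:ℝ)..r, ((L:ℝ)*M)/N * s := by
    apply intervalIntegral.integral_mono_on hr.1 ((Q_intInt hN ψ hψc hr.1).abs)
      ((continuous_const.mul continuous_id).intervalIntegrable _ _)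
    intro s hs
    exact Q_bound hN ψ hψc hs.1 (fun σ _ => hψb σ)
  have h4 : (∫ s in (0:ℝ)..r, ((L:ℝ)*M)/N * s) = ((L:ℝ)*M)/N * (r^2/2) := by
    rw [intervalIntegral.integral_const_mul, integral_id]
    ring
  have h5 : ((L:ℝ)*M)/N * (r^2/2) = (L:ℝ) * r^2 / (2*N) * M := by
    field_simp
  have hr2 : r^2 ≤ Rm^2 := by nlinarith [hr.1, hr.2]
  have h6 : (L:ℝ) * r^2 / (2*N) * M ≤ (L:ℝ) * Rm^2 / (2*N) * M := by
    gcongr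
  linarith [h2.trans h3]


lemma T_congr (f : ℝ → ℝ) (N : ℕ) (a : ℝ) (w₁ w₂ : ℝ → ℝ) {Rm r : ℝ}
    (hr : r ∈ Icc (0:ℝ) Rm) (h : ∀ σ ∈ Icc (0:ℝ) Rm, w₁ σ = w₂ σ) :
    T f N a w₁ r = T f N a w₂ r := by
  unfold T
  congr 1
  apply intervalIntegral.integral_congr
  intro s hs
  rw [uIcc_of_le hr.1] at hs
  unfold Q P
  congr 1
  apply intervalIntegral.integral_congr
  intro σ hσ
  rw [uIcc_of_le hs.1] at hσ
  show σ ^ (N - 1) * f (w₁ σ) = σ ^ (N - 1) * f (w₂ σ)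
  rw [h σ ⟨hσ.1, hσ.2.trans (hs.2.trans hr.2)⟩]

end Stmt11Aux

open Stmt11Aux in
/-- Local existence and uniqueness for the integrated form of the radial
steady-state equation: there is a unique continuous `u` on `[0, R_m]` with
`u(r) = a - ∫₀ʳ s^{1-N} (∫₀ˢ σ^{N-1} f(u(σ)) dσ) ds`. -/
theorem stmt11 (f : ℝ → ℝ) (L : NNReal) (hf : LipschitzWith L f)
    {N : ℕ} (hN : 1 ≤ N) (a : ℝ) (Rm : ℝ) (hRm : 0 < Rm)
    (hsmall : (L : ℝ) * Rm ^ 2 / (2 * (N : ℝ)) < 1) :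
    (∃ u : ℝ → ℝ, ContinuousOn u (Set.Icc 0 Rm) ∧
      ∀ r ∈ Set.Icc (0:ℝ) Rm,
        u r = a - ∫ s in (0:ℝ)..r,
          s ^ (1 - (N:ℤ)) * ∫ σ in (0:ℝ)..s, σ ^ (N - 1) * f (u σ)) ∧
    (∀ u v : ℝ → ℝ,
      (ContinuousOn u (Set.Icc 0 Rm) ∧
        ∀ r ∈ Set.Icc (0:ℝ) Rm,
          u r = a - ∫ s in (0:ℝ)..r,
            s ^ (1 - (N:ℤ)) * ∫ σ in (0:ℝ)..s, σ ^ (N - 1) * f (u σ)) →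
      (ContinuousOn v (Set.Icc 0 Rm) ∧
        ∀ r ∈ Set.Icc (0:ℝ) Rm,
          v r = a - ∫ s in (0:ℝ)..r,
            s ^ (1 - (N:ℤ)) * ∫ σ in (0:ℝ)..s, σ ^ (N - 1) * f (v σ)) →
      Set.EqOn u v (Set.Icc 0 Rm)) := by
  have hfc := hf.continuous
  have hRm0 : (0:ℝ) ≤ Rm := hRm.le
  haveI : Nonempty (Icc (0:ℝ) Rm) := ⟨⟨0, left_mem_Icc.mpr hRm0⟩⟩
  let ext : C(Icc (0:ℝ) Rm, ℝ) → ℝ → ℝ := fun U t => U (projIcc 0 Rm hRm0 t)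
  have ext_cont : ∀ U : C(Icc (0:ℝ) Rm, ℝ), Continuous (ext U) := fun U =>
    U.continuous.comp continuous_projIcc
  have ext_eq : ∀ (U : C(Icc (0:ℝ) Rm, ℝ)) (t : ℝ) (ht : t ∈ Icc (0:ℝ) Rm),
      ext U t = U ⟨t, ht⟩ := by
    intro U t ht
    simp only [ext]
    rw [projIcc_of_mem hRm0 ht]
  let Φ : C(Icc (0:ℝ) Rm, ℝ) → C(Icc (0:ℝ) Rm, ℝ) := fun U =>
    ⟨(Icc (0:ℝ) Rm).restrict (T f N a (ext U)),
      (contT f N a hN hfc (ext U) (ext_cont U) hRm0).restrict⟩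
  have hΦ_apply : ∀ (U : C(Icc (0:ℝ) Rm, ℝ)) (x : Icc (0:ℝ) Rm),
      Φ U x = T f N a (ext U) x := fun _ _ => rfl
  set K : NNReal := ⟨(L:ℝ) * Rm ^ 2 / (2 * N), by positivity⟩ with hKdef
  have hKcoe : (K : ℝ) = (L:ℝ) * Rm ^ 2 / (2 * N) := rfl
  have hK1 : K < 1 := by
    rw [← NNReal.coe_lt_coe, NNReal.coe_one, hKcoe]
    exact hsmall
  have hΦ_lip : LipschitzWith K Φ := by
    apply LipschitzWith.of_dist_le_mul
    intro U V
    rw [ContinuousMap.dist_le (by positivity)]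
    intro x
    rw [hΦ_apply, hΦ_apply, Real.dist_eq, hKcoe]
    refine T_dist f hf hN a hRm (ext U) (ext V) (ext_cont U) (ext_cont V)
      dist_nonneg (fun σ => ?_) x.2
    simpa [ext, Real.dist_eq] using
      ContinuousMap.dist_apply_le_dist (f := U) (g := V) (projIcc 0 Rm hRm0 σ)
  have hC : ContractingWith K Φ := ⟨hK1, hΦ_lip⟩
  -- every solution gives a fixed point of Φ
  have fixed : ∀ (u : ℝ → ℝ) (hu : ContinuousOn u (Icc (0:ℝ) Rm)),
      (∀ r ∈ Set.Icc (0:ℝ) Rm,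
        u r = a - ∫ s in (0:ℝ)..r,
          s ^ (1 - (N:ℤ)) * ∫ σ in (0:ℝ)..s, σ ^ (N - 1) * f (u σ)) →
      Φ ⟨(Icc (0:ℝ) Rm).restrict u, hu.restrict⟩ =
        ⟨(Icc (0:ℝ) Rm).restrict u, hu.restrict⟩ := by
    intro u hu heq
    apply ContinuousMap.ext
    rintro ⟨r, hr⟩
    have agree : ∀ σ ∈ Icc (0:ℝ) Rm,
        ext ⟨(Icc (0:ℝ) Rm).restrict u, hu.restrict⟩ σ = u σ := by
      intro σ hσ
      simp only [ext, projIcc_of_mem hRm0 hσ]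
      rfl
    have h1 : Φ ⟨(Icc (0:ℝ) Rm).restrict u, hu.restrict⟩ ⟨r, hr⟩ = T f N a u r := by
      rw [hΦ_apply]
      exact T_congr f N a _ u hr agree
    have h2 : u r = T f N a u r := by
      rw [heq r hr]
      simp only [T, Q, P]
    rw [h1, ← h2]
    rfl
  constructor
  · -- existence
    set U₀ := ContractingWith.fixedPoint Φ hC with hU₀
    refine ⟨ext U₀, (ext_cont U₀).continuousOn, ?_⟩
    intro r hr
    have h1 : ext U₀ r = U₀ ⟨r, hr⟩ := ext_eq U₀ r hr
    have h2 : Φ U₀ = U₀ := hC.fixedPoint_isFixedPt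
    have h4 : (Φ U₀) ⟨r, hr⟩ = U₀ ⟨r, hr⟩ := by rw [h2]
    have h3 : ext U₀ r = T f N a (ext U₀) r := by
      rw [h1, ← h4, hΦ_apply]
    rw [h3]
    simp only [T, Q, P]
  · -- uniqueness
    rintro u v ⟨hu, hue⟩ ⟨hv, hve⟩ r hr
    have hU := fixed u hu hue
    have hV := fixed v hv hve
    have huv : (⟨(Icc (0:ℝ) Rm).restrict u, hu.restrict⟩ : C(Icc (0:ℝ) Rm, ℝ)) =
        ⟨(Icc (0:ℝ) Rm).restrict v, hv.restrict⟩ :=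
      hC.fixedPoint_unique' hU hV
    have := congrArg (fun (W : C(Icc (0:ℝ) Rm, ℝ)) => W ⟨r, hr⟩) huv
    exact this
end
end

section
/- Let N ≥ 1 be an integer, let f : ℝ → ℝ be continuous with primitive F(s) := ∫₀^s f(σ) dσ, and let θ₁ > 0 be such that F(s) > 0 for every s ∉ [0,θ₁]. Let R > 0, let a ∈ [0,θ₁] with F(a) ≤ 0, and let u : [0,R] → ℝ be continuously differentiable on [0,R] and twice differentiable on (0,R), satisfying u''(r) + ((N-1)/r)·u'(r) = -f(u(r)) for all r ∈ (0,R), u(0) = a, and u'(0) = 0. Then for every r ∈ [0,R], one has 0 ≤ u(r) ≤ θ₁ and u'(r)² ≤ -2·F(u(r)). -/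
open Set MeasureTheory Real

noncomputable section

/-- Invariant region for the radial steady-state equation: if `F > 0`
outside `[0, θ₁]`, `a ∈ [0, θ₁]` with `F(a) ≤ 0`, and `u` solves
`u'' + ((N-1)/r) u' = -f(u)` on `(0,R)` with `u(0) = a`, `u'(0) = 0`, then
`0 ≤ u(r) ≤ θ₁` and `u'(r)² ≤ -2 F(u(r))` for all `r ∈ [0,R]`. -/
theorem stmt13 {N : ℕ} (hN : 1 ≤ N) (f : ℝ → ℝ) (hf : Continuous f)
    (θ₁ : ℝ) (hθ₁ : 0 < θ₁)
    (hFpos : ∀ s : ℝ, s ∉ Set.Icc (0:ℝ) θ₁ → 0 < Fprim f s)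
    (R : ℝ) (hR : 0 < R)
    (a : ℝ) (ha : a ∈ Set.Icc (0:ℝ) θ₁) (hFa : Fprim f a ≤ 0)
    (u : ℝ → ℝ)
    (hu1 : ∀ r ∈ Set.Icc (0:ℝ) R, DifferentiableAt ℝ u r)
    (hu1' : ContinuousOn (deriv u) (Set.Icc (0:ℝ) R))
    (hu2 : ∀ r ∈ Set.Ioo (0:ℝ) R, DifferentiableAt ℝ (deriv u) r)
    (heq : ∀ r ∈ Set.Ioo (0:ℝ) R,
      deriv (deriv u) r + ((N:ℝ) - 1) / r * deriv u r = -f (u r))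
    (hu0 : u 0 = a) (hu'0 : deriv u 0 = 0) :
    ∀ r ∈ Set.Icc (0:ℝ) R,
      (0 ≤ u r ∧ u r ≤ θ₁) ∧ (deriv u r) ^ 2 ≤ -2 * Fprim f (u r) := by
  -- FTC: Fprim f has derivative f everywhere
  have hF : ∀ s : ℝ, HasDerivAt (Fprim f) (f s) s := fun s =>
    intervalIntegral.integral_hasDerivAt_right (hf.intervalIntegrable 0 s)
      hf.aestronglyMeasurable.stronglyMeasurableAtFilter hf.continuousAt
  -- Energy
  set E : ℝ → ℝ := fun r => (deriv u r) ^ 2 + 2 * Fprim f (u r) with hE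
  have hucont : ContinuousOn u (Set.Icc (0:ℝ) R) := fun r hr =>
    (hu1 r hr).continuousAt.continuousWithinAt
  have hEcont : ContinuousOn E (Set.Icc (0:ℝ) R) := by
    apply ContinuousOn.add (hu1'.pow 2)
    exact ContinuousOn.mul continuousOn_const
      ((Differentiable.continuous (fun s => (hF s).differentiableAt)).comp_continuousOn hucont)
  have hEderiv : ∀ r ∈ Set.Ioo (0:ℝ) R,
      HasDerivAt E (-2 * (((N:ℝ) - 1) / r) * (deriv u r) ^ 2) r := by
    intro r hr
    have hr' : r ∈ Set.Icc (0:ℝ) R := Set.mem_Icc.2 ⟨hr.1.le, hr.2.le⟩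
    have h1 : HasDerivAt (fun x => (deriv u x) ^ 2)
        (2 * deriv u r * deriv (deriv u) r) r := by
      have := ((hu2 r hr).hasDerivAt).fun_pow 2
      simpa [mul_comm, mul_assoc, mul_left_comm] using this
    have h2 : HasDerivAt (fun x => 2 * Fprim f (u x))
        (2 * (f (u r) * deriv u r)) r := by
      exact (((hF (u r)).comp r (hu1 r hr').hasDerivAt)).const_mul 2
    have := h1.fun_add h2
    refine this.congr_deriv ?_
    have heqr := heq r hr
    have hdd : deriv (deriv u) r = -f (u r) - ((N:ℝ) - 1) / r * deriv u r := by
      linarith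
    rw [hdd]; ring
  have hmono : ∀ r ∈ Set.Icc (0:ℝ) R, E r ≤ E 0 := by
    intro r hr
    have hanti : AntitoneOn E (Set.Icc (0:ℝ) R) := by
      apply antitoneOn_of_deriv_nonpos (convex_Icc _ _) hEcont
      · intro x hx
        rw [interior_Icc] at hx
        exact (hEderiv x hx).differentiableAt.differentiableWithinAt
      · intro x hx
        rw [interior_Icc] at hx
        rw [(hEderiv x hx).deriv]
        have hN1 : (0:ℝ) ≤ ((N:ℝ) - 1) / x := by
          apply div_nonneg _ hx.1.le
          have : (1:ℝ) ≤ (N:ℝ) := by exact_mod_cast hN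
          linarith
        nlinarith [sq_nonneg (deriv u x)]
    exact hanti (Set.left_mem_Icc.2 hR.le) hr hr.1
  have hE0 : E 0 = 2 * Fprim f a := by simp [hE, hu'0, hu0]
  intro r hr
  have hEr : E r ≤ 0 := by
    have := hmono r hr
    rw [hE0] at this
    linarith
  have hFu : Fprim f (u r) ≤ 0 := by
    have : (deriv u r) ^ 2 + 2 * Fprim f (u r) ≤ 0 := hEr
    nlinarith [sq_nonneg (deriv u r)]
  refine ⟨?_, by simp only [hE] at hEr; linarith⟩
  by_contra hcon
  have : u r ∉ Set.Icc (0:ℝ) θ₁ := by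
    simp only [Set.mem_Icc] at *
    tauto
  exact absurd hFu (not_le.2 (hFpos _ this))
end
end

section
/- Let N ≥ 1 be an integer, let f : ℝ → ℝ be Lipschitz continuous with Lipschitz constant L, and let R > 0. Let u, v : [0,R] → ℝ both be continuously differentiable on [0,R] and twice differentiable on (0,R), each satisfying w''(r) + ((N-1)/r)·w'(r) = -f(w(r)) for all r ∈ (0,R), with u'(0) = v'(0) = 0. Then for all r ∈ [0,R], (u(r) - v(r))² + (u'(r) - v'(r))² ≤ (u(0) - v(0))²·e^{(1+L)·r}. In particular, the solutions of the radial steady-state equation depend continuously on the initial value at r = 0. -/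
open Set MeasureTheory Real

noncomputable section

/-- Continuous dependence on the initial value for the radial
steady-state equation: if `u, v` both solve `w'' + ((N-1)/r) w' = -f(w)` on `(0,R)`
with `u'(0) = v'(0) = 0`, then
`(u(r)-v(r))² + (u'(r)-v'(r))² ≤ (u(0)-v(0))² e^{(1+L)r}` on `[0,R]`. -/
theorem stmt14 {N : ℕ} (hN : 1 ≤ N) (f : ℝ → ℝ) (L : NNReal) (hf : LipschitzWith L f)
    (R : ℝ) (hR : 0 < R)
    (u v : ℝ → ℝ)
    (hu1 : ∀ r ∈ Set.Icc (0:ℝ) R, DifferentiableAt ℝ u r)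
    (hu1' : ContinuousOn (deriv u) (Set.Icc (0:ℝ) R))
    (hu2 : ∀ r ∈ Set.Ioo (0:ℝ) R, DifferentiableAt ℝ (deriv u) r)
    (hueq : ∀ r ∈ Set.Ioo (0:ℝ) R,
      deriv (deriv u) r + ((N:ℝ) - 1) / r * deriv u r = -f (u r))
    (hv1 : ∀ r ∈ Set.Icc (0:ℝ) R, DifferentiableAt ℝ v r)
    (hv1' : ContinuousOn (deriv v) (Set.Icc (0:ℝ) R))
    (hv2 : ∀ r ∈ Set.Ioo (0:ℝ) R, DifferentiableAt ℝ (deriv v) r)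
    (hveq : ∀ r ∈ Set.Ioo (0:ℝ) R,
      deriv (deriv v) r + ((N:ℝ) - 1) / r * deriv v r = -f (v r))
    (hu'0 : deriv u 0 = 0) (hv'0 : deriv v 0 = 0) :
    ∀ r ∈ Set.Icc (0:ℝ) R,
      (u r - v r) ^ 2 + (deriv u r - deriv v r) ^ 2 ≤
        (u 0 - v 0) ^ 2 * Real.exp ((1 + (L:ℝ)) * r) := by
  set K : ℝ := 1 + (L : ℝ) with hK
  have hK0 : 0 ≤ K := by positivity
  set ξ : ℝ → ℝ := fun r => (u r - v r) ^ 2 + (deriv u r - deriv v r) ^ 2 with hξ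
  set D : ℝ → ℝ := fun r => 2 * (u r - v r) * (deriv u r - deriv v r)
      + 2 * (deriv u r - deriv v r) * (deriv (deriv u) r - deriv (deriv v) r) with hD
  -- continuity of ξ on [0, R]
  have hcu : ContinuousOn u (Set.Icc (0:ℝ) R) :=
    fun r hr => (hu1 r hr).continuousAt.continuousWithinAt
  have hcv : ContinuousOn v (Set.Icc (0:ℝ) R) :=
    fun r hr => (hv1 r hr).continuousAt.continuousWithinAt
  have hcont : ContinuousOn ξ (Set.Icc (0:ℝ) R) :=
    ((hcu.sub hcv).pow 2).add ((hu1'.sub hv1').pow 2)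
  -- ξ has derivative D on (0, R)
  have hderiv : ∀ x ∈ Set.Ioo (0:ℝ) R, HasDerivAt ξ (D x) x := by
    intro x hx
    have hxI : x ∈ Set.Icc (0:ℝ) R := ⟨hx.1.le, hx.2.le⟩
    have h1 : HasDerivAt (fun r => u r - v r) (deriv u x - deriv v x) x :=
      ((hu1 x hxI).hasDerivAt).sub ((hv1 x hxI).hasDerivAt)
    have h2 : HasDerivAt (fun r => deriv u r - deriv v r)
        (deriv (deriv u) x - deriv (deriv v) x) x :=
      ((hu2 x hx).hasDerivAt).sub ((hv2 x hx).hasDerivAt)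
    have := (h1.fun_pow 2).add (h2.fun_pow 2)
    refine this.congr_deriv ?_
    simp only [hD]
    ring
  -- bound D x ≤ K * ξ x on (0, R)
  have hbound : ∀ x ∈ Set.Ioo (0:ℝ) R, D x ≤ K * ξ x := by
    intro x hx
    have hx0 : 0 < x := hx.1
    obtain ⟨a, ha⟩ : ∃ a, u x - v x = a := ⟨_, rfl⟩
    obtain ⟨b, hb⟩ : ∃ b, deriv u x - deriv v x = b := ⟨_, rfl⟩
    obtain ⟨c, hc'⟩ : ∃ c, ((N:ℝ) - 1) / x = c := ⟨_, rfl⟩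
    obtain ⟨d, hd⟩ : ∃ d, f (u x) - f (v x) = d := ⟨_, rfl⟩
    have hc : deriv (deriv u) x - deriv (deriv v) x = -c * b - d := by
      have h1 := hueq x hx
      have h2 := hveq x hx
      rw [← hb, ← hc', ← hd]
      have h3 : ((N:ℝ) - 1)/x * deriv u x - ((N:ℝ)-1)/x * deriv v x
          = ((N:ℝ)-1)/x * (deriv u x - deriv v x) := by ring
      linarith
    have hLip : |d| ≤ (L : ℝ) * |a| := by
      rw [← hd, ← ha]
      have := hf.dist_le_mul (u x) (v x)
      simpa [Real.dist_eq] using this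
    have hNx : 0 ≤ c := by
      rw [← hc']
      apply div_nonneg _ hx0.le
      have : (1:ℝ) ≤ (N:ℝ) := by exact_mod_cast hN
      linarith
    have hD' : D x = 2 * a * b + 2 * b * (-c * b - d) := by
      simp only [hD]
      rw [ha, hb, hc]
    have hξ' : ξ x = a ^ 2 + b ^ 2 := by simp only [hξ]; rw [ha, hb]
    rw [hD', hξ', hK]
    have h2ab : 2 * a * b ≤ a ^ 2 + b ^ 2 := by nlinarith [sq_nonneg (a - b)]
    have hbb : 2 * b * (-c * b) ≤ 0 := by nlinarith [mul_nonneg hNx (sq_nonneg b)]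
    have habs : -(2 * b * d) ≤ (L : ℝ) * (a ^ 2 + b ^ 2) := by
      have h1 : -(2 * b * d) ≤ 2 * |b| * |d| := by
        calc -(2 * b * d) ≤ |2 * b * d| := neg_le_abs _
          _ = 2 * |b| * |d| := by rw [abs_mul, abs_mul]; norm_num
      have h2 : 2 * |b| * |d| ≤ 2 * |b| * ((L:ℝ) * |a|) := by
        apply mul_le_mul_of_nonneg_left hLip; positivity
      have h3 : 2 * |b| * ((L:ℝ) * |a|) ≤ (L:ℝ) * (a ^ 2 + b ^ 2) := by
        nlinarith [sq_nonneg (|a| - |b|), sq_abs a, sq_abs b, L.coe_nonneg]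
      linarith
    nlinarith
  -- Gronwall on [a₀, R] for a₀ ∈ (0, R]
  have hgron : ∀ a₀ ∈ Set.Ioc (0:ℝ) R, ∀ x ∈ Set.Icc a₀ R,
      ξ x ≤ ξ a₀ * Real.exp (K * (x - a₀)) := by
    intro a₀ ha₀ x hx
    have key := le_gronwallBound_of_liminf_deriv_right_le (f := ξ) (f' := D)
      (δ := ξ a₀) (K := K) (ε := 0) (a := a₀) (b := R)
      (hcont.mono (Set.Icc_subset_Icc ha₀.1.le le_rfl))
      (fun y hy r hr => by
        have hyI : y ∈ Set.Ioo (0:ℝ) R := ⟨lt_of_lt_of_le ha₀.1 hy.1, hy.2⟩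
        exact ((hderiv y hyI).hasDerivWithinAt (s := Set.Ici y)).liminf_right_slope_le hr)
      le_rfl
      (fun y hy => by
        have hyI : y ∈ Set.Ioo (0:ℝ) R := ⟨lt_of_lt_of_le ha₀.1 hy.1, hy.2⟩
        simpa using hbound y hyI)
      x hx
    rwa [gronwallBound_ε0] at key
  -- conclude
  intro r hr
  have hξ0 : ξ 0 = (u 0 - v 0) ^ 2 := by simp [hξ, hu'0, hv'0]
  rcases eq_or_lt_of_le hr.1 with h0 | h0
  · subst h0
    rw [hu'0, hv'0]
    simp
  · -- r > 0 : take limit a₀ → 0⁺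
    have hmem : Set.Ioo (0:ℝ) r ∈ nhdsWithin (0:ℝ) (Set.Ioi 0) :=
      Ioo_mem_nhdsGT_of_mem ⟨le_rfl, h0⟩
    have hev : ∀ᶠ a₀ in nhdsWithin (0:ℝ) (Set.Ioi 0),
        ξ r ≤ ξ a₀ * Real.exp (K * r) := by
      filter_upwards [hmem] with a₀ ha₀
      have h1 : ξ r ≤ ξ a₀ * Real.exp (K * (r - a₀)) :=
        hgron a₀ ⟨ha₀.1, ha₀.2.le.trans hr.2⟩ r ⟨ha₀.2.le, hr.2⟩
      have h2 : Real.exp (K * (r - a₀)) ≤ Real.exp (K * r) := by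
        apply Real.exp_le_exp.2
        nlinarith [mul_nonneg hK0 ha₀.1.le]
      have hξa : 0 ≤ ξ a₀ := by rw [hξ]; positivity
      calc ξ r ≤ ξ a₀ * Real.exp (K * (r - a₀)) := h1
        _ ≤ ξ a₀ * Real.exp (K * r) := mul_le_mul_of_nonneg_left h2 hξa
    have htend : Filter.Tendsto (fun a₀ => ξ a₀ * Real.exp (K * r))
        (nhdsWithin (0:ℝ) (Set.Ioi 0)) (nhds (ξ 0 * Real.exp (K * r))) := by
      apply Filter.Tendsto.mul_const
      have h1 : Filter.Tendsto ξ (nhdsWithin (0:ℝ) (Set.Icc 0 R)) (nhds (ξ 0)) :=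
        hcont.continuousWithinAt ⟨le_rfl, hR.le⟩
      apply h1.mono_left
      rw [nhdsWithin_le_iff]
      exact Filter.mem_of_superset (Ioo_mem_nhdsGT_of_mem ⟨le_rfl, hR⟩)
        (fun y hy => ⟨hy.1.le, hy.2.le⟩)
    have := ge_of_tendsto htend hev
    rwa [hξ0] at this
end
end
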